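/- arXiv:1607.04735 — 5 statements merged into one kernel-verified Lean document; each statement's English description precedes it below -/
import Mathlib

section
/- Let H be a set-valued map satisfying (A1). Then there exists a sequence of set-valued maps {H^(l)}_{l≥1} such that for every l ≥ 1: (i) H^(l) : ℝ^d × S → {subsets of ℝ^d} is continuous (both upper and lower semicontinuous) and for every (x,s), H^(l)(x,s) is a convex and compact subset of ℝ^d; (ii) for every (x,s), H(x,s) ⊆ H^(l+1)(x,s) ⊆ H^(l)(x,s); (iii) there exists K^(l) > 0 such that for every (x,s), sup_{z ∈ H^(l)(x,s)} ‖z‖ ≤ K^(l)(1 + ‖x‖), and moreover sup_{l≥1} K^(l) < ∞. Furthermore, for every (x,s), H(x,s) = ∩_{l≥1} H^(l)(x,s). -/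
open Filter Topology Pointwise

abbrev Euc (d : ℕ) := EuclideanSpace ℝ (Fin d)

/-- Upper semicontinuity of a set-valued map (ε-δ form). -/
def SVUpperSemicontinuous {d : ℕ} {S : Type*} [MetricSpace S]
    (G : Euc d → S → Set (Euc d)) : Prop :=
  ∀ (x₀ : Euc d) (s₀ : S), ∀ ε > (0 : ℝ), ∃ δ > (0 : ℝ), ∀ (x : Euc d) (s : S),
    ‖x - x₀‖ < δ → dist s s₀ < δ →
    G x s ⊆ G x₀ s₀ + Metric.closedBall (0 : Euc d) ε

/-- Lower semicontinuity of a set-valued map (sequential form). -/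
def SVLowerSemicontinuous {d : ℕ} {S : Type*} [MetricSpace S]
    (G : Euc d → S → Set (Euc d)) : Prop :=
  ∀ (x₀ : Euc d) (s₀ : S), ∀ z₀ ∈ G x₀ s₀, ∀ (xn : ℕ → Euc d) (sn : ℕ → S),
    Tendsto xn atTop (𝓝 x₀) → Tendsto sn atTop (𝓝 s₀) →
    ∃ zn : ℕ → Euc d, (∀ n, zn n ∈ G (xn n) (sn n)) ∧ Tendsto zn atTop (𝓝 z₀)

section AuxStmt1
open Metric Set
set_option linter.unusedSectionVars false

section Aux
variable {d : ℕ} {S : Type*} [MetricSpace S] [CompactSpace S]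

/-- closed convex hull of the values of `H` over a closed ball. -/
def auxHull (H : Euc d → S → Set (Euc d)) (ρ : ℝ) (i : Euc d × S) : Set (Euc d) :=
  closure (convexHull ℝ (⋃ q ∈ Metric.closedBall i ρ, H q.1 q.2))

variable {H : Euc d → S → Set (Euc d)}

lemma auxHull_convex (ρ : ℝ) (i : Euc d × S) : Convex ℝ (auxHull H ρ i) :=
  (convex_convexHull ℝ _).closure

lemma auxHull_isClosed (ρ : ℝ) (i : Euc d × S) : IsClosed (auxHull H ρ i) :=
  isClosed_closure

lemma subset_auxHull {ρ : ℝ} {i q : Euc d × S} (h : dist q i ≤ ρ) :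
    H q.1 q.2 ⊆ auxHull H ρ i := by
  refine subset_trans ?_ ((subset_convexHull ℝ _).trans subset_closure)
  exact Set.subset_biUnion_of_mem (u := fun (q : Euc d × S) => H q.1 q.2) h

lemma auxHull_nonempty (hne : ∀ x s, (H x s).Nonempty) {ρ : ℝ} (hρ : 0 ≤ ρ)
    (i : Euc d × S) : (auxHull H ρ i).Nonempty :=
  ((hne i.1 i.2).mono (subset_auxHull (by simpa using hρ)))

lemma auxHull_subset_closedBall {K ρ : ℝ} (hK : 0 ≤ K)
    (hKb : ∀ x s, ∀ z ∈ H x s, ‖z‖ ≤ K * (1 + ‖x‖)) (i : Euc d × S) :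
    auxHull H ρ i ⊆ Metric.closedBall 0 (K * (1 + ‖i.1‖ + ρ)) := by
  apply closure_minimal _ Metric.isClosed_closedBall
  apply convexHull_min _ (convex_closedBall _ _)
  rintro z hz
  simp only [Set.mem_iUnion, exists_prop] at hz
  obtain ⟨q, hq, hzq⟩ := hz
  rw [Metric.mem_closedBall] at hq
  have h1 : ‖q.1‖ ≤ ‖i.1‖ + ρ := by
    have h0 := norm_sub_norm_le q.1 i.1
    have h2 : dist q.1 i.1 ≤ dist q i := by
      rw [Prod.dist_eq]; exact le_max_left _ _
    rw [dist_eq_norm] at h2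
    linarith
  have := hKb q.1 q.2 z hzq
  rw [Metric.mem_closedBall, dist_zero_right]
  calc ‖z‖ ≤ K * (1 + ‖q.1‖) := this
    _ ≤ K * (1 + ‖i.1‖ + ρ) := by nlinarith

lemma auxHull_mono {ρ ρ' : ℝ} {i j : Euc d × S} (h : dist i j + ρ ≤ ρ') :
    auxHull H ρ i ⊆ auxHull H ρ' j := by
  apply closure_mono
  apply convexHull_mono
  apply Set.iUnion₂_subset
  intro q hq
  rw [Metric.mem_closedBall] at hq
  refine Set.subset_biUnion_of_mem (u := fun (q : Euc d × S) => H q.1 q.2) ?_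
  rw [Metric.mem_closedBall]
  calc dist q j ≤ dist q i + dist i j := dist_triangle _ _ _
    _ ≤ ρ' := by linarith

lemma auxHull_isCompact {K ρ : ℝ} (hK : 0 ≤ K)
    (hKb : ∀ x s, ∀ z ∈ H x s, ‖z‖ ≤ K * (1 + ‖x‖)) (i : Euc d × S) :
    IsCompact (auxHull H ρ i) :=
  isCompact_of_isClosed_isBounded isClosed_closure
    ((Metric.isBounded_closedBall).subset (auxHull_subset_closedBall hK hKb i))


variable {K : ℝ}

lemma usc_of_A1 (hK : 0 < K)
    (hKb : ∀ x s, ∀ z ∈ H x s, ‖z‖ ≤ K * (1 + ‖x‖))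
    (hA1iii : ∀ (x : Euc d) (s : S) (xn : ℕ → Euc d) (sn : ℕ → S)
      (zn : ℕ → Euc d) (z : Euc d),
      Tendsto xn atTop (𝓝 x) → Tendsto sn atTop (𝓝 s) →
      (∀ n, zn n ∈ H (xn n) (sn n)) → Tendsto zn atTop (𝓝 z) → z ∈ H x s) :
    ∀ (p : Euc d × S), ∀ ε > (0:ℝ), ∃ δ > (0:ℝ), ∀ q : Euc d × S, dist q p ≤ δ →
      H q.1 q.2 ⊆ H p.1 p.2 + Metric.closedBall 0 ε := by
  intro p ε hε
  by_contra hcon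
  push_neg at hcon
  have key : ∀ n : ℕ, ∃ q : Euc d × S, dist q p ≤ ((n:ℝ)+1)⁻¹ ∧
      ∃ z ∈ H q.1 q.2, z ∉ H p.1 p.2 + Metric.closedBall 0 ε := by
    intro n
    obtain ⟨q, hq1, hq2⟩ := hcon (((n:ℝ)+1)⁻¹) (by positivity)
    exact ⟨q, hq1, Set.not_subset.1 hq2⟩
  choose q hqd z hzmem hznot using key
  have hqp : Tendsto q atTop (𝓝 p) := by
    rw [tendsto_iff_dist_tendsto_zero]
    apply squeeze_zero (fun n => dist_nonneg) hqd
    exact tendsto_one_div_add_atTop_nhds_zero_nat.congr (by intro n; rw [one_div])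
  have hzb : ∀ n, z n ∈ Metric.closedBall (0 : Euc d) (K * (2 + ‖p.1‖)) := by
    intro n
    rw [Metric.mem_closedBall, dist_zero_right]
    have h1 := hKb _ _ _ (hzmem n)
    have h2 : ‖(q n).1‖ ≤ ‖p.1‖ + 1 := by
      have h0 := norm_sub_norm_le (q n).1 p.1
      have h3 : dist (q n).1 p.1 ≤ dist (q n) p := by
        rw [Prod.dist_eq]; exact le_max_left _ _
      have h4 : ((n:ℝ)+1)⁻¹ ≤ 1 := by
        rw [inv_le_one_iff₀]; right; linarith [Nat.cast_nonneg (α := ℝ) n]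
      rw [dist_eq_norm] at h3
      linarith [hqd n]
    nlinarith
  obtain ⟨w, hwb, φ, hφ, hwt⟩ :=
    (isCompact_closedBall (0 : Euc d) (K * (2 + ‖p.1‖))).tendsto_subseq hzb
  have hqφ : Tendsto (q ∘ φ) atTop (𝓝 p) := hqp.comp hφ.tendsto_atTop
  have hw : w ∈ H p.1 p.2 := by
    refine hA1iii p.1 p.2 (fun k => (q (φ k)).1) (fun k => (q (φ k)).2)
      (fun k => z (φ k)) w ?_ ?_ (fun k => hzmem (φ k)) hwt
    · exact (Continuous.tendsto continuous_fst p).comp hqφ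
    · exact (Continuous.tendsto continuous_snd p).comp hqφ
  have : ∀ᶠ k in atTop, z (φ k) ∈ Metric.closedBall w ε :=
    hwt.eventually (Metric.closedBall_mem_nhds w hε)
  obtain ⟨k, hk⟩ := this.exists
  apply hznot (φ k)
  have : z (φ k) = w + (z (φ k) - w) := by abel
  rw [this]
  apply Set.add_mem_add hw
  rw [Metric.mem_closedBall] at hk
  rw [Metric.mem_closedBall, dist_zero_right]
  rw [dist_eq_norm] at hk
  simpa using hk

lemma auxHull_small (hconv : ∀ x s, Convex ℝ (H x s)) (hcpt : ∀ x s, IsCompact (H x s))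
    (husc : ∀ (p : Euc d × S), ∀ ε > (0:ℝ), ∃ δ > (0:ℝ), ∀ q : Euc d × S, dist q p ≤ δ →
      H q.1 q.2 ⊆ H p.1 p.2 + Metric.closedBall 0 ε) :
    ∀ (p : Euc d × S), ∀ ε > (0:ℝ), ∃ δ > (0:ℝ), ∀ ρ, 0 ≤ ρ → ρ ≤ δ →
      auxHull H ρ p ⊆ H p.1 p.2 + Metric.closedBall 0 ε := by
  intro p ε hε
  obtain ⟨δ, hδ, hs⟩ := husc p ε hε
  refine ⟨δ, hδ, fun ρ hρ0 hρδ => ?_⟩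
  apply closure_minimal
  · apply convexHull_min _ ((hconv p.1 p.2).add (convex_closedBall _ _))
    apply Set.iUnion₂_subset
    intro q hq
    rw [Metric.mem_closedBall] at hq
    exact hs q (hq.trans hρδ)
  · exact ((hcpt p.1 p.2).add (isCompact_closedBall _ _)).isClosed


/-- The blended (mollified) set-valued map built from a partition of unity. -/
def auxG (H : Euc d → S → Set (Euc d))
    (f : PartitionOfUnity (Euc d × S) (Euc d × S) Set.univ) (r : ℝ) (p : Euc d × S) :
    Set (Euc d) :=
  { z | ∃ T : Finset (Euc d × S), { i | f i p ≠ 0 } ⊆ ↑T ∧ ∃ c : Euc d × S → Euc d,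
      (∀ i ∈ T, c i ∈ auxHull H (2*r) i) ∧ z = ∑ i ∈ T, f i p • c i }

lemma pou_sum_one (f : PartitionOfUnity (Euc d × S) (Euc d × S) Set.univ)
    (p : Euc d × S) {T : Finset (Euc d × S)} (hT : { i | f i p ≠ 0 } ⊆ ↑T) :
    ∑ i ∈ T, f i p = 1 := by
  rw [← finsum_eq_sum_of_support_subset (fun i => f i p) hT]
  exact f.sum_eq_one (Set.mem_univ p)

lemma subset_auxG {f : PartitionOfUnity (Euc d × S) (Euc d × S) Set.univ} {r : ℝ}
    (hsub : f.IsSubordinate (fun i => Metric.ball i r)) (hr : 0 < r) (p : Euc d × S) :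
    H p.1 p.2 ⊆ auxG H f r p := by
  classical
  intro z hz
  refine ⟨(f.locallyFinite.point_finite p).toFinset, by intro i hi; simpa using hi, fun _ => z,
    ?_, ?_⟩
  · intro i hi
    rw [Set.Finite.mem_toFinset] at hi
    have hdist : dist p i < r := by
      have := hsub i (subset_closure hi)
      rwa [Metric.mem_ball] at this
    exact subset_auxHull (by linarith) hz
  · rw [← Finset.sum_smul, pou_sum_one f p (by intro i hi; simpa using hi), one_smul]

lemma auxG_subset_auxHull {f : PartitionOfUnity (Euc d × S) (Euc d × S) Set.univ} {r : ℝ}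
    (hsub : f.IsSubordinate (fun i => Metric.ball i r)) (hr : 0 < r) (p : Euc d × S) :
    auxG H f r p ⊆ auxHull H (3*r) p := by
  classical
  rintro z ⟨T, hT, c, hc, rfl⟩
  have hfil : ∑ i ∈ T.filter (fun i => f i p ≠ 0), f i p • c i = ∑ i ∈ T, f i p • c i := by
    apply Finset.sum_filter_of_ne
    intro i hi hne hfi
    exact hne (by rw [hfi, zero_smul])
  rw [← hfil]
  apply Convex.sum_mem (auxHull_convex _ _)
  · intro i _; exact f.nonneg i p
  · apply pou_sum_one f p
    intro i hi
    simp only [Finset.coe_filter, Set.mem_setOf_eq]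
    exact ⟨hT hi, hi⟩
  · intro i hi
    rw [Finset.mem_filter] at hi
    have hdist : dist p i < r := by
      have := hsub i (subset_closure hi.2)
      rwa [Metric.mem_ball] at this
    refine auxHull_mono ?_ (hc i hi.1)
    rw [dist_comm] at hdist
    linarith

lemma auxG_extend {f : PartitionOfUnity (Euc d × S) (Euc d × S) Set.univ} {r : ℝ}
    {p : Euc d × S} {T T' : Finset (Euc d × S)} (hTT' : T ⊆ T')
    (hT : { i | f i p ≠ 0 } ⊆ ↑T) {c : Euc d × S → Euc d}
    (pk : Euc d × S → Euc d) (hpk : ∀ i, pk i ∈ auxHull H (2*r) i)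
    (hc : ∀ i ∈ T, c i ∈ auxHull H (2*r) i) :
    ∃ c' : Euc d × S → Euc d, (∀ i ∈ T', c' i ∈ auxHull H (2*r) i) ∧
      (∀ g : (Euc d × S) → ℝ, ({ i | g i ≠ 0 } ⊆ ↑T) →
        ∑ i ∈ T', g i • c' i = ∑ i ∈ T, g i • c i) ∧ (∀ i ∈ T, c' i = c i) := by
  classical
  refine ⟨fun i => if i ∈ T then c i else pk i, ?_, ?_, ?_⟩
  · intro i hi
    by_cases h : i ∈ T
    · simpa only [if_pos h] using hc i h
    · simpa only [if_neg h] using hpk i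
  · intro g hg
    rw [← Finset.sum_subset hTT']
    · apply Finset.sum_congr rfl
      intro i hi; simp only [if_pos hi]
    · intro i _ hiT
      have : g i = 0 := by
        by_contra hne
        exact hiT (hg hne)
      rw [this, zero_smul]
  · intro i hi; simp only [if_pos hi]

lemma auxG_convex (hne : ∀ x s, (H x s).Nonempty)
    {f : PartitionOfUnity (Euc d × S) (Euc d × S) Set.univ} {r : ℝ}
    (hr : 0 < r) (p : Euc d × S) : Convex ℝ (auxG H f r p) := by
  classical
  rintro z₁ ⟨T₁, hT₁, c₁, hc₁, rfl⟩ z₂ ⟨T₂, hT₂, c₂, hc₂, rfl⟩ a b ha hb hab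
  have hpk : ∀ i : Euc d × S, ∃ w, w ∈ auxHull H (2*r) i := fun i =>
    auxHull_nonempty hne (by linarith) i
  choose pk hpk using hpk
  obtain ⟨c₁', hc₁', hs₁, -⟩ := auxG_extend (T' := T₁ ∪ T₂) Finset.subset_union_left hT₁ pk hpk hc₁
  obtain ⟨c₂', hc₂', hs₂, -⟩ := auxG_extend (T' := T₁ ∪ T₂) Finset.subset_union_right hT₂ pk hpk hc₂
  refine ⟨T₁ ∪ T₂, ?_, fun i => a • c₁' i + b • c₂' i, ?_, ?_⟩
  · exact hT₁.trans (by exact_mod_cast Finset.coe_subset.2 Finset.subset_union_left)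
  · intro i hi
    exact (auxHull_convex _ _) (hc₁' i hi) (hc₂' i hi) ha hb hab
  · rw [← hs₁ (fun i => f i p) hT₁, ← hs₂ (fun i => f i p) hT₂]
    simp only [smul_add]
    rw [Finset.sum_add_distrib, Finset.smul_sum, Finset.smul_sum]
    congr 1 <;> (apply Finset.sum_congr rfl; intro i _; rw [smul_comm])


lemma auxG_isCompact (hne : ∀ x s, (H x s).Nonempty) {K : ℝ} (hK : 0 ≤ K)
    (hKb : ∀ x s, ∀ z ∈ H x s, ‖z‖ ≤ K * (1 + ‖x‖))
    {f : PartitionOfUnity (Euc d × S) (Euc d × S) Set.univ} {r : ℝ}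
    (hr : 0 < r) (p : Euc d × S) : IsCompact (auxG H f r p) := by
  classical
  have hpk : ∀ i : Euc d × S, ∃ w, w ∈ auxHull H (2*r) i := fun i =>
    auxHull_nonempty hne (by linarith) i
  choose pk hpk using hpk
  set T₀ : Finset (Euc d × S) := (f.locallyFinite.point_finite p).toFinset with hT₀def
  have hT₀mem : ∀ i : Euc d × S, i ∈ T₀ ↔ f i p ≠ 0 := by
    intro i; rw [hT₀def, Set.Finite.mem_toFinset]; rfl
  have himg : auxG H f r p =
      (fun c : {x // x ∈ T₀} → Euc d => ∑ i ∈ T₀.attach, f i.1 p • c i) ''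
        (Set.univ.pi fun i : {x // x ∈ T₀} => auxHull H (2*r) i.1) := by
    ext z
    constructor
    · rintro ⟨T, hT, c, hc, rfl⟩
      have hT₀T : T₀ ⊆ T := by
        intro i hi; exact hT ((hT₀mem i).1 hi)
      refine ⟨fun i => c i.1, fun i _ => hc i.1 (hT₀T i.2), ?_⟩
      show (∑ i ∈ T₀.attach, f i.1 p • c i.1) = ∑ i ∈ T, f i p • c i
      rw [Finset.sum_attach T₀ (fun i => f i p • c i)]
      apply Finset.sum_subset hT₀T
      intro i _ hiT₀
      have : f i p = 0 := by
        by_contra hne2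
        exact hiT₀ ((hT₀mem i).2 hne2)
      rw [this, zero_smul]
    · rintro ⟨c, hcpi, rfl⟩
      refine ⟨T₀, fun i hi => (hT₀mem i).2 hi, fun i => if h : i ∈ T₀ then c ⟨i, h⟩ else pk i,
        ?_, ?_⟩
      · intro i hi
        simp only [dif_pos hi]
        exact hcpi ⟨i, hi⟩ (Set.mem_univ _)
      · show (∑ i ∈ T₀.attach, f i.1 p • c i) = ∑ i ∈ T₀, f i p • (if h : i ∈ T₀ then c ⟨i, h⟩ else pk i)
        rw [← Finset.sum_attach T₀ (fun i => f i p • (if h : i ∈ T₀ then c ⟨i, h⟩ else pk i))]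
        apply Finset.sum_congr rfl
        intro i _
        simp only [dif_pos i.2]
  rw [himg]
  apply IsCompact.image
  · exact isCompact_univ_pi fun i => auxHull_isCompact hK hKb i.1
  · exact continuous_finset_sum _ fun i _ => (continuous_apply i).const_smul ((f i.1) p)

lemma auxG_bound {K : ℝ} (hK : 0 < K)
    (hKb : ∀ x s, ∀ z ∈ H x s, ‖z‖ ≤ K * (1 + ‖x‖))
    {f : PartitionOfUnity (Euc d × S) (Euc d × S) Set.univ} {r : ℝ}
    (hsub : f.IsSubordinate (fun i => Metric.ball i r)) (hr : 0 < r) (hr1 : r ≤ 1)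
    (p : Euc d × S) : ∀ z ∈ auxG H f r p, ‖z‖ ≤ (4*K) * (1 + ‖p.1‖) := by
  intro z hz
  have h1 := auxHull_subset_closedBall (ρ := 3*r) hK.le hKb p
    (auxG_subset_auxHull hsub hr p hz)
  rw [Metric.mem_closedBall, dist_zero_right] at h1
  have : K * (1 + ‖p.1‖ + 3*r) ≤ (4*K) * (1 + ‖p.1‖) := by nlinarith [norm_nonneg p.1]
  linarith


lemma auxG_approx {K : ℝ} (hK : 0 < K)
    (hKb : ∀ x s, ∀ z ∈ H x s, ‖z‖ ≤ K * (1 + ‖x‖))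
    (hne : ∀ x s, (H x s).Nonempty)
    {f : PartitionOfUnity (Euc d × S) (Euc d × S) Set.univ} {r : ℝ}
    (hsub : f.IsSubordinate (fun i => Metric.ball i r)) (hr : 0 < r) (hr1 : r ≤ 1)
    (p₀ : Euc d × S) {ε : ℝ} (hε : 0 < ε) :
    ∃ δ > (0:ℝ), ∀ p p' : Euc d × S, dist p p₀ < δ → dist p' p₀ < δ →
      ∀ z ∈ auxG H f r p, ∃ z' ∈ auxG H f r p', ‖z - z'‖ ≤ ε := by
  classical
  have hpkne : ∀ i : Euc d × S, ∃ w, w ∈ auxHull H (2*r) i := fun i =>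
    auxHull_nonempty hne (by linarith) i
  choose pk hpk using hpkne
  set R : ℝ := K * (‖p₀.1‖ + 7) with hRdef
  have hR : 0 < R := by have := norm_nonneg p₀.1; nlinarith
  obtain ⟨N, hN, hfinN⟩ := f.locallyFinite p₀
  set Istar := hfinN.toFinset with hIdef
  set F : Euc d × S → ℝ := fun q => ∑ i ∈ Istar, |f i q - f i p₀| with hFdef
  have hFcont : Continuous F := continuous_finset_sum _ fun i _ =>
    ((f i).continuous.sub continuous_const).abs
  have hF0 : F p₀ = 0 := by simp [hFdef]
  have hIio : Set.Iio (ε/(2*R)) ∈ 𝓝 (F p₀) := by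
    rw [hF0]; exact Iio_mem_nhds (by positivity)
  have hmem : (F ⁻¹' Set.Iio (ε/(2*R))) ∩ N ∈ 𝓝 p₀ :=
    Filter.inter_mem (hFcont.continuousAt.preimage_mem_nhds hIio) hN
  obtain ⟨δ₀, hδ₀, hball⟩ := Metric.mem_nhds_iff.1 hmem
  refine ⟨min δ₀ 1, lt_min hδ₀ one_pos, ?_⟩
  intro p p' hp hp'
  obtain ⟨hFp, hpN⟩ := hball (Metric.mem_ball.2 (lt_of_lt_of_le hp (min_le_left _ _)))
  obtain ⟨hFp', hp'N⟩ := hball (Metric.mem_ball.2 (lt_of_lt_of_le hp' (min_le_left _ _)))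
  rw [Set.mem_preimage, Set.mem_Iio] at hFp hFp'
  rintro z ⟨T, hT, c, hc, rfl⟩
  set T' := T ∪ (f.locallyFinite.point_finite p').toFinset with hT'def
  obtain ⟨c', hc', hsum, -⟩ := auxG_extend (T' := T') Finset.subset_union_left hT pk hpk hc
  have hz : ∑ i ∈ T, f i p • c i = ∑ i ∈ T', f i p • c' i := (hsum (fun i => f i p) hT).symm
  refine ⟨∑ i ∈ T', f i p' • c' i, ⟨T', ?_, c', hc', rfl⟩, ?_⟩
  · intro i hi
    refine Finset.mem_coe.2 (Finset.mem_union_right _ ?_)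
    rw [Set.Finite.mem_toFinset]
    exact hi
  · rw [hz, ← Finset.sum_sub_distrib]
    have hterm : ∀ i ∈ T', f i p • c' i - f i p' • c' i = (f i p - f i p') • c' i :=
      fun i _ => (sub_smul _ _ _).symm
    rw [Finset.sum_congr rfl hterm]
    have h1 : ‖∑ i ∈ T', (f i p - f i p') • c' i‖ ≤ ∑ i ∈ T', ‖(f i p - f i p') • c' i‖ :=
      norm_sum_le _ _
    have h2 : ∀ i ∈ T', ‖(f i p - f i p') • c' i‖ ≤ |f i p - f i p'| * R := by
      intro i hi
      rw [norm_smul, Real.norm_eq_abs]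
      by_cases h0 : f i p = 0 ∧ f i p' = 0
      · rw [h0.1, h0.2]; simp
      · have hact : dist p i < r ∨ dist p' i < r := by
          rcases not_and_or.1 h0 with h | h
          · left; have := hsub i (subset_closure h); rwa [Metric.mem_ball] at this
          · right; have := hsub i (subset_closure h); rwa [Metric.mem_ball] at this
        have hip₀ : dist i p₀ < 2 := by
          rcases hact with h | h
          · calc dist i p₀ ≤ dist i p + dist p p₀ := dist_triangle _ _ _
              _ < r + min δ₀ 1 := by rw [dist_comm i p]; exact add_lt_add h hp
              _ ≤ 2 := by have := min_le_right δ₀ (1:ℝ); linarith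
          · calc dist i p₀ ≤ dist i p' + dist p' p₀ := dist_triangle _ _ _
              _ < r + min δ₀ 1 := by rw [dist_comm i p']; exact add_lt_add h hp'
              _ ≤ 2 := by have := min_le_right δ₀ (1:ℝ); linarith
        have hi1 : ‖i.1‖ ≤ ‖p₀.1‖ + 2 := by
          have h0' := norm_sub_norm_le i.1 p₀.1
          have h2' : dist i.1 p₀.1 ≤ dist i p₀ := by
            rw [Prod.dist_eq]; exact le_max_left _ _
          rw [dist_eq_norm] at h2'
          linarith
        have hcb : ‖c' i‖ ≤ R := by
          have hmemb := auxHull_subset_closedBall (ρ := 2*r) hK.le hKb i (hc' i hi)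
          rw [Metric.mem_closedBall, dist_zero_right] at hmemb
          have : 1 + ‖i.1‖ + 2*r ≤ ‖p₀.1‖ + 7 := by linarith
          calc ‖c' i‖ ≤ K * (1 + ‖i.1‖ + 2*r) := hmemb
            _ ≤ K * (‖p₀.1‖ + 7) := by nlinarith
        exact mul_le_mul_of_nonneg_left hcb (abs_nonneg _)
    have h3 : ∑ i ∈ T', |f i p - f i p'| * R ≤ ∑ i ∈ Istar, |f i p - f i p'| * R := by
      have hzero : ∀ i ∈ T', i ∉ T' ∩ Istar → |f i p - f i p'| * R = 0 := by
        intro i hiT' hiTI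
        have hnotI : i ∉ Istar := fun hmem => hiTI (Finset.mem_inter.2 ⟨hiT', hmem⟩)
        have hfp : f i p = 0 := by
          by_contra h
          apply hnotI
          rw [hIdef, Set.Finite.mem_toFinset]
          exact ⟨p, h, hpN⟩
        have hfp' : f i p' = 0 := by
          by_contra h
          apply hnotI
          rw [hIdef, Set.Finite.mem_toFinset]
          exact ⟨p', h, hp'N⟩
        rw [hfp, hfp']; simp
      rw [← Finset.sum_subset Finset.inter_subset_left hzero]
      apply Finset.sum_le_sum_of_subset_of_nonneg Finset.inter_subset_right
      intro i _ _
      positivity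
    have h4 : ∑ i ∈ Istar, |f i p - f i p'| * R ≤ (F p + F p') * R := by
      rw [← Finset.sum_mul]
      apply mul_le_mul_of_nonneg_right _ hR.le
      rw [hFdef]
      simp only []
      rw [← Finset.sum_add_distrib]
      apply Finset.sum_le_sum
      intro i _
      calc |f i p - f i p'| ≤ |f i p - f i p₀| + |f i p₀ - f i p'| := abs_sub_le _ _ _
        _ = |f i p - f i p₀| + |f i p' - f i p₀| := by rw [abs_sub_comm ((f i) p₀)]
    have h5 : (F p + F p') * R ≤ ε := by
      have hd : ε / (2*R) * (2*R) = ε := by field_simp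
      nlinarith
    have h6 : ∑ i ∈ T', ‖(f i p - f i p') • c' i‖ ≤ ∑ i ∈ T', |f i p - f i p'| * R :=
      Finset.sum_le_sum h2
    linarith


lemma auxHull_subset_auxG (hne : ∀ x s, (H x s).Nonempty) {K : ℝ} (hK : 0 ≤ K)
    (hKb : ∀ x s, ∀ z ∈ H x s, ‖z‖ ≤ K * (1 + ‖x‖))
    {f : PartitionOfUnity (Euc d × S) (Euc d × S) Set.univ} {r : ℝ}
    (hsub : f.IsSubordinate (fun i => Metric.ball i r)) (hr : 0 < r) (p : Euc d × S) :
    auxHull H r p ⊆ auxG H f r p := by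
  classical
  apply closure_minimal
  · apply convexHull_min _ (auxG_convex hne hr p)
    apply Set.iUnion₂_subset
    intro q hq
    rw [Metric.mem_closedBall] at hq
    intro w hw
    refine ⟨(f.locallyFinite.point_finite p).toFinset, by intro i hi; simpa using hi,
      fun _ => w, ?_, ?_⟩
    · intro i hi
      rw [Set.Finite.mem_toFinset] at hi
      have hdist : dist p i < r := by
        have := hsub i (subset_closure hi); rwa [Metric.mem_ball] at this
      apply subset_auxHull _ hw
      calc dist q i ≤ dist q p + dist p i := dist_triangle _ _ _
        _ ≤ 2*r := by linarith
    · rw [← Finset.sum_smul, pou_sum_one f p (by intro i hi; simpa using hi), one_smul]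
  · exact (auxG_isCompact hne hK hKb hr p).isClosed


end Aux
end AuxStmt1

/-- continuous embedding of a set-valued map satisfying (A1) into a
decreasing sequence of continuous set-valued maps. -/
theorem stmt_1 {d : ℕ} {S : Type*} [MetricSpace S] [CompactSpace S]
    (H : Euc d → S → Set (Euc d))
    (hA1i : ∀ (x : Euc d) (s : S),
      (H x s).Nonempty ∧ IsCompact (H x s) ∧ Convex ℝ (H x s))
    (hA1ii : ∃ K > (0 : ℝ), ∀ (x : Euc d) (s : S), ∀ z ∈ H x s, ‖z‖ ≤ K * (1 + ‖x‖))
    (hA1iii : ∀ (x : Euc d) (s : S) (xn : ℕ → Euc d) (sn : ℕ → S)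
      (zn : ℕ → Euc d) (z : Euc d),
      Tendsto xn atTop (𝓝 x) → Tendsto sn atTop (𝓝 s) →
      (∀ n, zn n ∈ H (xn n) (sn n)) → Tendsto zn atTop (𝓝 z) → z ∈ H x s) :
    ∃ Hl : ℕ → Euc d → S → Set (Euc d),
      (∀ l, SVUpperSemicontinuous (Hl l) ∧ SVLowerSemicontinuous (Hl l) ∧
        ∀ (x : Euc d) (s : S), Convex ℝ (Hl l x s) ∧ IsCompact (Hl l x s)) ∧
      (∀ l (x : Euc d) (s : S), H x s ⊆ Hl (l + 1) x s ∧ Hl (l + 1) x s ⊆ Hl l x s) ∧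
      (∃ K : ℕ → ℝ, (∀ l, 0 < K l) ∧
        (∀ l (x : Euc d) (s : S), ∀ z ∈ Hl l x s, ‖z‖ ≤ K l * (1 + ‖x‖)) ∧
        BddAbove (Set.range K)) ∧
      (∀ (x : Euc d) (s : S), H x s = ⋂ l, Hl l x s) := by
  classical
  obtain ⟨K, hK, hKb⟩ := hA1ii
  have hne : ∀ x s, (H x s).Nonempty := fun x s => (hA1i x s).1
  have hcpt : ∀ x s, IsCompact (H x s) := fun x s => (hA1i x s).2.1
  have hcvx : ∀ x s, Convex ℝ (H x s) := fun x s => (hA1i x s).2.2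
  have husc := usc_of_A1 hK hKb hA1iii
  have hsmall := auxHull_small hcvx hcpt husc
  set r : ℕ → ℝ := fun l => (1/3:ℝ)^l with hrdef
  have hr0 : ∀ l, 0 < r l := fun l => by positivity
  have hr1 : ∀ l, r l ≤ 1 := fun l => pow_le_one₀ (by norm_num) (by norm_num)
  have hcov : ∀ l : ℕ, (Set.univ : Set (Euc d × S)) ⊆ ⋃ i : Euc d × S, Metric.ball i (r l) := by
    intro l p _
    exact Set.mem_iUnion.2 ⟨p, Metric.mem_ball_self (hr0 l)⟩
  have hex : ∀ l : ℕ, ∃ f : PartitionOfUnity (Euc d × S) (Euc d × S) Set.univ,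
      f.IsSubordinate (fun i => Metric.ball i (r l)) := fun l =>
    PartitionOfUnity.exists_isSubordinate isClosed_univ _ (fun i => Metric.isOpen_ball) (hcov l)
  choose f hf using hex
  refine ⟨fun l x s => auxG H (f l) (r l) (x, s), ?_, ?_, ?_, ?_⟩
  · intro l
    refine ⟨?_, ?_, fun x s => ⟨auxG_convex hne (hr0 l) (x,s),
      auxG_isCompact hne hK.le hKb (hr0 l) (x,s)⟩⟩
    · -- upper semicontinuity
      intro x₀ s₀ ε hε
      obtain ⟨δ, hδ, happ⟩ := auxG_approx hK hKb hne (hf l) (hr0 l) (hr1 l) (x₀,s₀) hε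
      refine ⟨δ, hδ, ?_⟩
      intro x s hx hs z hzmem
      have hdist : dist (x,s) (x₀,s₀) < δ := by
        rw [Prod.dist_eq]
        apply max_lt _ hs
        rwa [dist_eq_norm]
      obtain ⟨z', hz', hzz'⟩ := happ (x,s) (x₀,s₀) hdist (by simpa using hδ) z hzmem
      have hzeq : z = z' + (z - z') := by abel
      rw [hzeq]
      apply Set.add_mem_add hz'
      rw [Metric.mem_closedBall, dist_zero_right]
      exact hzz'.trans_eq' (by rw [norm_sub_rev])
    · -- lower semicontinuity
      intro x₀ s₀ z₀ hz₀ xn sn hxn hsn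
      set pn : ℕ → Euc d × S := fun n => (xn n, sn n) with hpn
      have hpt : Tendsto pn atTop (𝓝 (x₀, s₀)) := hxn.prodMk_nhds hsn
      have hch : ∀ n, ∃ y ∈ auxG H (f l) (r l) (pn n),
          Metric.infDist z₀ (auxG H (f l) (r l) (pn n)) = dist z₀ y := fun n =>
        (auxG_isCompact hne hK.le hKb (hr0 l) (pn n)).exists_infDist_eq_dist
          ((hne (xn n) (sn n)).mono (subset_auxG (hf l) (hr0 l) (pn n))) z₀
      choose zn hzn hzd using hch
      refine ⟨zn, hzn, ?_⟩
      rw [tendsto_iff_dist_tendsto_zero]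
      have heq : (fun n => dist (zn n) z₀)
          = fun n => Metric.infDist z₀ (auxG H (f l) (r l) (pn n)) := by
        funext n; rw [dist_comm, hzd n]
      rw [heq, Metric.tendsto_atTop]
      intro ε hε
      obtain ⟨δ, hδ, happ⟩ := auxG_approx hK hKb hne (hf l) (hr0 l) (hr1 l) (x₀,s₀)
        (half_pos hε)
      obtain ⟨Nn, hNn⟩ := Filter.eventually_atTop.1
        (hpt.eventually (Metric.ball_mem_nhds _ hδ))
      refine ⟨Nn, fun n hn => ?_⟩
      obtain ⟨z', hz', hzz'⟩ := happ (x₀,s₀) (pn n) (by simpa using hδ)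
        (Metric.mem_ball.1 (hNn n hn)) z₀ hz₀
      have hle : Metric.infDist z₀ (auxG H (f l) (r l) (pn n)) ≤ ε/2 :=
        le_trans (Metric.infDist_le_dist_of_mem hz') (by rw [dist_eq_norm]; exact hzz')
      rw [Real.dist_eq, sub_zero, abs_of_nonneg Metric.infDist_nonneg]
      linarith
  · intro l x s
    refine ⟨subset_auxG (hf (l+1)) (hr0 (l+1)) (x,s), ?_⟩
    intro z hz
    have h1 := auxG_subset_auxHull (hf (l+1)) (hr0 (l+1)) (x,s) hz
    have heq : 3 * r (l+1) = r l := by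
      rw [hrdef]; simp only []; rw [pow_succ]; ring
    rw [heq] at h1
    exact auxHull_subset_auxG hne hK.le hKb (hf l) (hr0 l) (x,s) h1
  · refine ⟨fun _ => 4*K, fun l => by show (0:ℝ) < 4*K; linarith, fun l x s z hz =>
      auxG_bound hK hKb (hf l) (hr0 l) (hr1 l) (x,s) z hz, ⟨4*K, ?_⟩⟩
    rintro y ⟨l, rfl⟩; exact le_rfl
  · intro x s
    apply Set.Subset.antisymm
    · exact Set.subset_iInter fun l => subset_auxG (hf l) (hr0 l) (x,s)
    · intro z hz
      rw [Set.mem_iInter] at hz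
      have hin : ∀ ε > (0:ℝ), z ∈ H x s + Metric.closedBall 0 ε := by
        intro ε hε
        obtain ⟨δ, hδ, hsm⟩ := hsmall (x,s) ε hε
        obtain ⟨l, hl⟩ : ∃ l : ℕ, 3 * r l ≤ δ := by
          obtain ⟨l, hl⟩ := exists_pow_lt_of_lt_one (by positivity : (0:ℝ) < δ/3)
            (by norm_num : (1/3:ℝ) < 1)
          refine ⟨l, ?_⟩
          rw [hrdef]; simp only []
          linarith
        have h1 := auxG_subset_auxHull (hf l) (hr0 l) (x,s) (hz l)
        exact hsm (3 * r l) (by positivity) hl h1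
      have hinf : Metric.infDist z (H x s) ≤ 0 := by
        apply le_of_forall_pos_le_add
        intro ε hε
        obtain ⟨h, hh, b, hb, hhb⟩ := Set.mem_add.1 (hin ε hε)
        rw [Metric.mem_closedBall, dist_zero_right] at hb
        have : dist z h ≤ ε := by
          rw [dist_eq_norm, show z - h = b by rw [← hhb]; abel]
          exact hb
        linarith [Metric.infDist_le_dist_of_mem (x := z) hh]
      have hcl : z ∈ closure (H x s) :=
        (Metric.mem_closure_iff_infDist_zero (hne x s)).2
          (le_antisymm hinf Metric.infDist_nonneg)
      rwa [(hcpt x s).isClosed.closure_eq] at hcl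
end

section
/- Let H be a set-valued map satisfying (A1). Then there exists a sequence of continuous functions {h^(l)}_{l≥1}, h^(l) : ℝ^d × S × U → ℝ^d, such that for every l ≥ 1: (i) for every (x,s), the set h^(l)(x,s,U) := {h^(l)(x,s,u) : u ∈ U} is a convex and compact subset of ℝ^d; (ii) for every (x,s), H(x,s) ⊆ h^(l+1)(x,s,U) ⊆ h^(l)(x,s,U); (iii) there exists K^(l) > 0 such that for every (x,s,u), ‖h^(l)(x,s,u)‖ ≤ K^(l)(1 + ‖x‖). Furthermore, for every (x,s), H(x,s) = ∩_{l≥1} h^(l)(x,s,U). -/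
/-!
The support function `σ p v = sup {⟪v, z⟫ | z ∈ H p}` is upper semicontinuous in `p` by the closed
graph and local boundedness, so by Baire's construction it is the decreasing limit, as `L → ∞`, of
its Lipschitz envelopes `sup_q (σ q v - L * dist p q)`. The sets cut out by these envelopes raised
by `r = 2⁻ˡ` are convex and compact, contain `H p`, decrease to `H p`, and move continuously in
the Hausdorff distance: a point of the set at `p'` slides towards `H p'` by the fraction
`L * dist p p' / r` into the set at `p`. Metric projection onto a closed convex set is 1-Lipschitz
in the point and continuous in the set for the Hausdorff distance, so `u ↦ proj (R • u)` with `R`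
the growth radius is a continuous parametrization of these sets by the unit ball.
-/

open Filter Topology Pointwise

open Set Metric
open scoped RealInnerProductSpace

section ConvexProjection

variable {E : Type*} [NormedAddCommGroup E] [InnerProductSpace ℝ E]

/-- The metric projection when `C` is nonempty, closed and convex; an arbitrary point otherwise. -/
noncomputable def convexProj (C : Set E) (y : E) : E :=
  Classical.epsilon fun p => p ∈ C ∧ ∀ c ∈ C, ⟪y - p, c - p⟫ ≤ 0

variable [CompleteSpace E] {C C' : Set E}

theorem convexProj_spec (hne : C.Nonempty) (hcl : IsClosed C) (hcv : Convex ℝ C) (y : E) :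
    convexProj C y ∈ C ∧ ∀ c ∈ C, ⟪y - convexProj C y, c - convexProj C y⟫ ≤ 0 := by
  refine Classical.epsilon_spec (p := fun p => p ∈ C ∧ ∀ c ∈ C, ⟪y - p, c - p⟫ ≤ 0) ?_
  obtain ⟨p, hp, hmin⟩ := exists_norm_eq_iInf_of_complete_convex hne hcl.isComplete hcv y
  exact ⟨p, hp, (norm_eq_iInf_iff_real_inner_le_zero hcv hp).1 hmin⟩

theorem convexProj_eq_self (hne : C.Nonempty) (hcl : IsClosed C) (hcv : Convex ℝ C) {y : E}
    (hy : y ∈ C) : convexProj C y = y := by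
  have h := (convexProj_spec hne hcl hcv y).2 y hy
  rw [real_inner_self_eq_norm_sq] at h
  exact (sub_eq_zero.1 (norm_eq_zero.1 (by nlinarith [norm_nonneg (y - convexProj C y)]))).symm

theorem norm_sub_convexProj_le (hne : C.Nonempty) (hcl : IsClosed C) (hcv : Convex ℝ C) (y : E)
    {c : E} (hc : c ∈ C) : ‖y - convexProj C y‖ ≤ ‖y - c‖ := by
  set p := convexProj C y
  have h : ‖y - p‖ ^ 2 ≤ ⟪y - p, y - c⟫ := by
    have e : ⟪y - p, y - c⟫ = ⟪y - p, y - p⟫ - ⟪y - p, c - p⟫ := by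
      rw [← inner_sub_right]; congr 1; abel
    rw [e, real_inner_self_eq_norm_sq]
    linarith [(convexProj_spec hne hcl hcv y).2 c hc]
  nlinarith [real_inner_le_norm (y - p) (y - c), norm_nonneg (y - p), norm_nonneg (y - c)]

theorem lipschitzWith_convexProj (hne : C.Nonempty) (hcl : IsClosed C) (hcv : Convex ℝ C) :
    LipschitzWith 1 (convexProj C) := by
  refine LipschitzWith.of_dist_le_mul fun y y' => ?_
  simp only [NNReal.coe_one, one_mul, dist_eq_norm]
  obtain ⟨hp, hy⟩ := convexProj_spec hne hcl hcv y
  obtain ⟨hp', hy'⟩ := convexProj_spec hne hcl hcv y'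
  set p := convexProj C y
  set p' := convexProj C y'
  -- adding the variational inequalities at `p` and `p'` gives `‖p - p'‖² ≤ ⟪y - y', p - p'⟫`
  have h : ‖p - p'‖ ^ 2 ≤ ⟪y - y', p - p'⟫ := by
    have h1 := hy p' hp'
    have h2 := hy' p hp
    have e1 : p' - p = -(p - p') := by abel
    have e2 : y - y' = (y - p) - (y' - p') + (p - p') := by abel
    rw [e1, inner_neg_right] at h1
    rw [e2, inner_add_left, inner_sub_left, real_inner_self_eq_norm_sq]
    linarith
  nlinarith [real_inner_le_norm (y - y') (p - p'), norm_nonneg (p - p'), norm_nonneg (y - y')]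

theorem convexProj_sub_convexProj_sq_le (hne : C.Nonempty) (hcl : IsClosed C) (hcv : Convex ℝ C)
    (hne' : C'.Nonempty) (hcl' : IsClosed C') (hcv' : Convex ℝ C') {δ : ℝ}
    (h : ∀ z ∈ C, ∃ z' ∈ C', ‖z - z'‖ ≤ δ) (h' : ∀ z ∈ C', ∃ z' ∈ C, ‖z - z'‖ ≤ δ) (y : E) :
    ‖convexProj C y - convexProj C' y‖ ^ 2 ≤
      δ * (‖y - convexProj C y‖ + ‖y - convexProj C' y‖) := by
  obtain ⟨hp, hy⟩ := convexProj_spec hne hcl hcv y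
  obtain ⟨hp', hy'⟩ := convexProj_spec hne' hcl' hcv' y
  set p := convexProj C y
  set p' := convexProj C' y
  obtain ⟨q', hq', hpq'⟩ := h p hp
  obtain ⟨q, hq, hpq⟩ := h' p' hp'
  -- test the variational inequality at `p` with `q ≈ p'`, and at `p'` with `q' ≈ p`
  have e : ⟪y - p, p' - p⟫ ≤ ‖y - p‖ * δ := by
    have : p' - p = (p' - q) + (q - p) := by abel
    rw [this, inner_add_right]
    nlinarith [hy q hq, real_inner_le_norm (y - p) (p' - q), norm_nonneg (y - p)]
  have e' : ⟪y - p', p - p'⟫ ≤ ‖y - p'‖ * δ := by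
    have : p - p' = (p - q') + (q' - p') := by abel
    rw [this, inner_add_right]
    nlinarith [hy' q' hq', real_inner_le_norm (y - p') (p - q'), norm_nonneg (y - p')]
  have key : ‖p - p'‖ ^ 2 = ⟪y - p, p' - p⟫ + ⟪y - p', p - p'⟫ := by
    rw [← real_inner_self_eq_norm_sq]
    have : p' - p = -(p - p') := by abel
    rw [this, inner_neg_right, ← sub_eq_neg_add, ← inner_sub_left]
    congr 1
    abel
  linarith

theorem continuous_convexProj_left {X : Type*} [TopologicalSpace X] {C : X → Set E}
    (hne : ∀ p, (C p).Nonempty) (hcl : ∀ p, IsClosed (C p)) (hcv : ∀ p, Convex ℝ (C p))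
    (hC : ∀ p, Tendsto (fun q => hausdorffEDist (C q) (C p)) (𝓝 p) (𝓝 0)) (y : E) :
    Continuous fun p => convexProj (C p) y := by
  refine continuous_iff_continuousAt.2 fun p => Metric.tendsto_nhds.2 fun ε hε => ?_
  set D := ‖y - convexProj (C p) y‖
  obtain ⟨δ, hδ, hδε⟩ : ∃ δ > 0, δ * (2 * D + δ) < ε ^ 2 := by
    refine Eventually.exists_gt (p := fun δ => δ * (2 * D + δ) < ε ^ 2) ?_
    have : Continuous fun δ : ℝ => δ * (2 * D + δ) := by fun_prop
    exact this.tendsto' 0 0 (by simp) |>.eventually (gt_mem_nhds (by positivity))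
  filter_upwards [(hC p).eventually (gt_mem_nhds (ENNReal.ofReal_pos.2 hδ))] with q hq
  have near : ∀ {A B : Set E}, hausdorffEDist A B < ENNReal.ofReal δ →
      ∀ z ∈ A, ∃ z' ∈ B, ‖z - z'‖ ≤ δ := fun {A B} hAB z hz => by
    obtain ⟨z', hz', hzz'⟩ := exists_edist_lt_of_hausdorffEDist_lt (x := z) (t := B) hz hAB
    rw [edist_lt_ofReal, dist_eq_norm] at hzz'
    exact ⟨z', hz', hzz'.le⟩
  have hq' : hausdorffEDist (C p) (C q) < ENNReal.ofReal δ := by rwa [hausdorffEDist_comm]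
  have hsq := convexProj_sub_convexProj_sq_le (hne q) (hcl q) (hcv q) (hne p) (hcl p) (hcv p)
    (near hq) (near hq') y
  obtain ⟨z, hz, hpz⟩ := near hq' _ (convexProj_spec (hne p) (hcl p) (hcv p) y).1
  have hD : ‖y - convexProj (C q) y‖ ≤ D + δ :=
    (norm_sub_convexProj_le (hne q) (hcl q) (hcv q) y hz).trans
      ((norm_sub_le_norm_sub_add_norm_sub y (convexProj (C p) y) z).trans (by linarith))
  rw [dist_eq_norm]
  refine lt_of_pow_lt_pow_left₀ 2 hε.le (hsq.trans_lt ?_)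
  nlinarith [norm_nonneg (y - convexProj (C p) y)]

theorem continuous_convexProj {X : Type*} [TopologicalSpace X] {C : X → Set E}
    (hne : ∀ p, (C p).Nonempty) (hcl : ∀ p, IsClosed (C p)) (hcv : ∀ p, Convex ℝ (C p))
    (hC : ∀ p, Tendsto (fun q => hausdorffEDist (C q) (C p)) (𝓝 p) (𝓝 0)) :
    Continuous fun q : X × E => convexProj (C q.1) q.2 :=
  continuous_prod_of_continuous_lipschitzWith' _ 1
    (fun p => lipschitzWith_convexProj (hne p) (hcl p) (hcv p))
    (continuous_convexProj_left hne hcl hcv hC)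

theorem range_convexProj_smul (hne : C.Nonempty) (hcl : IsClosed C) (hcv : Convex ℝ C) {R : ℝ}
    (hR : 0 < R) (hC : C ⊆ closedBall 0 R) :
    range (fun u : closedBall (0 : E) 1 => convexProj C (R • (u : E))) = C := by
  refine Subset.antisymm (range_subset_iff.2 fun u => (convexProj_spec hne hcl hcv _).1)
    fun z hz => ?_
  have hu : R⁻¹ • z ∈ closedBall (0 : E) 1 := by
    rw [mem_closedBall_zero_iff, norm_smul, norm_inv, Real.norm_of_nonneg hR.le,
      inv_mul_le_one₀ hR]
    exact mem_closedBall_zero_iff.1 (hC hz)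
  refine ⟨⟨_, hu⟩, ?_⟩
  simp only [smul_inv_smul₀ hR.ne']
  exact convexProj_eq_self hne hcl hcv hz

end ConvexProjection

section SupportFunction

variable {E : Type*} [NormedAddCommGroup E] [InnerProductSpace ℝ E] {A : Set E} {v z : E} {c : ℝ}

noncomputable def supportFun (A : Set E) (v : E) : ℝ :=
  sSup ((fun z => ⟪v, z⟫) '' A)

theorem inner_le_supportFun (hA : ∀ z ∈ A, ‖z‖ ≤ c) (hz : z ∈ A) (v : E) :
    ⟪v, z⟫ ≤ supportFun A v := by
  refine le_csSup ⟨‖v‖ * c, forall_mem_image.2 fun z hz => ?_⟩ (mem_image_of_mem _ hz)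
  exact (real_inner_le_norm v z).trans (mul_le_mul_of_nonneg_left (hA z hz) (norm_nonneg v))

theorem supportFun_le (hne : A.Nonempty) (h : ∀ z ∈ A, ⟪v, z⟫ ≤ c) : supportFun A v ≤ c :=
  csSup_le (hne.image _) (forall_mem_image.2 h)

theorem supportFun_le_of_norm_le (hne : A.Nonempty) (hA : ∀ z ∈ A, ‖z‖ ≤ c) (hv : ‖v‖ = 1) :
    supportFun A v ≤ c :=
  supportFun_le hne fun z hz =>
    (real_inner_le_norm v z).trans (by rw [hv, one_mul]; exact hA z hz)

theorem exists_lt_inner_of_lt_supportFun (hne : A.Nonempty) (h : c < supportFun A v) :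
    ∃ z ∈ A, c < ⟪v, z⟫ := by
  obtain ⟨_, ⟨z, hz, rfl⟩, hcz⟩ := exists_lt_of_lt_csSup (hne.image _) h
  exact ⟨z, hz, hcz⟩

theorem mem_of_forall_inner_le_supportFun [CompleteSpace E] (hne : A.Nonempty)
    (hcl : IsClosed A) (hcv : Convex ℝ A) (h : ∀ v, ‖v‖ = 1 → ⟪v, z⟫ ≤ supportFun A v) :
    z ∈ A := by
  by_contra hz
  obtain ⟨f, u, hfA, hfz⟩ := geometric_hahn_banach_closed_point hcv hcl hz
  set w := (InnerProductSpace.toDual ℝ E).symm f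
  have hw : ∀ y, ⟪w, y⟫ = f y := fun y => InnerProductSpace.toDual_symm_apply
  have hw0 : w ≠ 0 := by
    rintro h0
    obtain ⟨a, ha⟩ := hne
    have hfa := hfA a ha
    rw [← hw, h0, inner_zero_left] at hfa hfz
    linarith
  have hnorm : 0 < ‖w‖ := norm_pos_iff.2 hw0
  have hunit : ‖‖w‖⁻¹ • w‖ = 1 := by
    rw [norm_smul, norm_inv, norm_norm, inv_mul_cancel₀ hnorm.ne']
  have hinner : ∀ y, ⟪‖w‖⁻¹ • w, y⟫ = ‖w‖⁻¹ * f y := fun y => by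
    rw [real_inner_smul_left, hw]
  have hσ : supportFun A (‖w‖⁻¹ • w) ≤ ‖w‖⁻¹ * u := supportFun_le hne fun a ha => by
    rw [hinner]; exact mul_le_mul_of_nonneg_left (hfA a ha).le (inv_nonneg.2 hnorm.le)
  have := (h _ hunit).trans hσ
  rw [hinner] at this
  exact absurd (le_of_mul_le_mul_left this (inv_pos.2 hnorm)) (not_le.2 hfz)

end SupportFunction

section LipschitzEnvelope

variable {X : Type*} [PseudoMetricSpace X] {f : X → ℝ} {p p' : X} {c K L L' : ℝ}

noncomputable def lipEnvelope (f : X → ℝ) (L : ℝ) (p : X) : ℝ :=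
  ⨆ q, f q - L * dist p q

theorem lipEnvelope_le (h : ∀ q, f q ≤ c + L * dist p q) : lipEnvelope f L p ≤ c :=
  have : Nonempty X := ⟨p⟩
  ciSup_le fun q => by linarith [h q]

theorem sub_le_lipEnvelope (h : ∀ q, f q ≤ c + L * dist p q) (q : X) :
    f q - L * dist p q ≤ lipEnvelope f L p :=
  le_ciSup (f := fun q => f q - L * dist p q) ⟨c, forall_mem_range.2 fun q => by linarith [h q]⟩ q

theorem le_lipEnvelope (h : ∀ q, f q ≤ c + L * dist p q) : f p ≤ lipEnvelope f L p := by
  simpa using sub_le_lipEnvelope h p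

theorem lipEnvelope_le_add_dist (h : ∀ q, f q ≤ c + L * dist p' q) (hL : 0 ≤ L) :
    lipEnvelope f L p ≤ lipEnvelope f L p' + L * dist p p' := by
  refine lipEnvelope_le fun q => ?_
  have := sub_le_lipEnvelope h q
  nlinarith [dist_triangle_left p' q p]

theorem lipEnvelope_anti (h : ∀ q, f q ≤ c + L * dist p q) (hLL' : L ≤ L') :
    lipEnvelope f L' p ≤ lipEnvelope f L p :=
  lipEnvelope_le fun q => by
    nlinarith [sub_le_lipEnvelope h q,
      mul_le_mul_of_nonneg_right hLL' (dist_nonneg (x := p) (y := q))]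

theorem tendsto_lipEnvelope (hf : UpperSemicontinuousAt f p) (h : ∀ q, f q ≤ c + K * dist p q) :
    Tendsto (fun L => lipEnvelope f L p) atTop (𝓝 (f p)) := by
  refine tendsto_order.2 ⟨fun a ha => ?_, fun a ha => ?_⟩
  · filter_upwards [eventually_ge_atTop K] with L hKL
    refine ha.trans_le (le_lipEnvelope (c := c) fun q => ?_)
    nlinarith [h q, mul_le_mul_of_nonneg_right hKL (dist_nonneg (x := p) (y := q))]
  · obtain ⟨a', hpa', ha'a⟩ := exists_between ha
    obtain ⟨δ, hδ, hball⟩ := Metric.eventually_nhds_iff.1 (hf a' hpa')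
    filter_upwards [eventually_ge_atTop (|K| + |c - a'| / δ)] with L hL
    refine (lipEnvelope_le fun q => ?_).trans_lt ha'a
    have hL0 : 0 ≤ L := le_trans (by positivity) hL
    rcases lt_or_ge (dist q p) δ with hq | hq
    · nlinarith [hball hq, dist_nonneg (x := p) (y := q)]
    · -- far from `p`, the slope `L` beats the growth bound
      rw [dist_comm] at hq
      have : |c - a'| ≤ |c - a'| / δ * dist p q := by
        rw [div_mul_eq_mul_div, le_div_iff₀ hδ]
        exact mul_le_mul_of_nonneg_left hq (abs_nonneg _)
      nlinarith [h q, le_abs_self (c - a'),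
        mul_le_mul_of_nonneg_right hL (dist_nonneg (x := p) (y := q)),
        mul_le_mul_of_nonneg_right (le_abs_self K) (dist_nonneg (x := p) (y := q))]

end LipschitzEnvelope

theorem isClosed_of_isClosed_graph {X E : Type*} [TopologicalSpace X] [TopologicalSpace E]
    {F : X → Set E} (hgraph : IsClosed {q : X × E | q.2 ∈ F q.1}) (p : X) : IsClosed (F p) :=
  hgraph.preimage (continuous_const.prodMk continuous_id)

section LipschitzApproximation

variable {E : Type*} [NormedAddCommGroup E] [InnerProductSpace ℝ E]
  {X : Type*} [PseudoMetricSpace X] {F : X → Set E} {β : X → ℝ} {K L L' r r' : ℝ} {p p' : X}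
  {v z : E}

theorem supportFun_le_add_mul_dist (hne : ∀ p, (F p).Nonempty)
    (hgrowth : ∀ p q, ∀ z ∈ F q, ‖z‖ ≤ β p + K * dist p q) (hKL : K ≤ L) (hv : ‖v‖ = 1)
    (p q : X) : supportFun (F q) v ≤ β p + L * dist p q :=
  supportFun_le_of_norm_le (hne q) (fun z hz => (hgrowth p q z hz).trans
    (by nlinarith [mul_le_mul_of_nonneg_right hKL (dist_nonneg (x := p) (y := q))])) hv

theorem upperSemicontinuous_supportFun [ProperSpace E]
    (hgraph : IsClosed {q : X × E | q.2 ∈ F q.1}) (hne : ∀ p, (F p).Nonempty)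
    (hgrowth : ∀ p q, ∀ z ∈ F q, ‖z‖ ≤ β p + K * dist p q) (hK : 0 ≤ K) (v : E) :
    UpperSemicontinuous fun p => supportFun (F p) v := by
  intro p y hy
  obtain ⟨y', hpy', hy'y⟩ := exists_between hy
  by_contra hfreq
  have hseq : ∃ᶠ q in 𝓝 p, dist q p < 1 ∧ ∃ z ∈ F q, y' < ⟪v, z⟫ :=
    ((not_eventually.1 hfreq).and_eventually (ball_mem_nhds p one_pos)).mono fun q hq =>
      ⟨hq.2, exists_lt_inner_of_lt_supportFun (hne q) (hy'y.trans_le (not_lt.1 hq.1))⟩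
  obtain ⟨q, hqp, hq⟩ := exists_seq_forall_of_frequently hseq
  choose z hzF hz using fun n => (hq n).2
  have hzb : ∀ n, z n ∈ closedBall (0 : E) (β p + K) := fun n => by
    rw [mem_closedBall_zero_iff]
    have hd : dist p (q n) ≤ 1 := (dist_comm p (q n)).trans_le (hq n).1.le
    nlinarith [hgrowth p (q n) (z n) (hzF n)]
  obtain ⟨z₀, -, φ, hφ, hzφ⟩ := (isCompact_closedBall _ _).tendsto_subseq hzb
  have hz₀ : z₀ ∈ F p := hgraph.mem_of_tendsto ((hqp.comp hφ.tendsto_atTop).prodMk_nhds hzφ)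
    (Eventually.of_forall fun n => hzF (φ n))
  have hlim : y' ≤ ⟪v, z₀⟫ := ge_of_tendsto
    (((continuous_const.inner continuous_id).tendsto z₀).comp hzφ)
    (Eventually.of_forall fun n => (hz (φ n)).le)
  have := inner_le_supportFun (fun z hz => by simpa using hgrowth p p z hz) hz₀ v
  linarith

noncomputable def lipApprox (F : X → Set E) (L r : ℝ) (p : X) : Set E :=
  ⋂ v ∈ sphere (0 : E) 1, {z | ⟪v, z⟫ ≤ lipEnvelope (fun q => supportFun (F q) v) L p + r}

theorem mem_lipApprox : z ∈ lipApprox F L r p ↔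
    ∀ v, ‖v‖ = 1 → ⟪v, z⟫ ≤ lipEnvelope (fun q => supportFun (F q) v) L p + r := by
  simp [lipApprox]

theorem convex_lipApprox : Convex ℝ (lipApprox F L r p) :=
  convex_iInter₂ fun v _ => convex_halfSpace_le (innerₗ E v).isLinear _

theorem isClosed_lipApprox : IsClosed (lipApprox F L r p) :=
  isClosed_biInter fun v _ => isClosed_le (by fun_prop) continuous_const

theorem subset_lipApprox (hne : ∀ p, (F p).Nonempty)
    (hgrowth : ∀ p q, ∀ z ∈ F q, ‖z‖ ≤ β p + K * dist p q) (hKL : K ≤ L) (hr : 0 ≤ r) (p : X) :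
    F p ⊆ lipApprox F L r p := fun z hz => mem_lipApprox.2 fun v hv => by
  have h₁ := inner_le_supportFun (fun z hz => by simpa using hgrowth p p z hz) hz v
  have h₂ := le_lipEnvelope (supportFun_le_add_mul_dist hne hgrowth hKL hv p)
  linarith

theorem norm_le_of_mem_lipApprox (hne : ∀ p, (F p).Nonempty)
    (hgrowth : ∀ p q, ∀ z ∈ F q, ‖z‖ ≤ β p + K * dist p q) (hK : 0 ≤ K) (hKL : K ≤ L)
    (hr : 0 ≤ r) (hz : z ∈ lipApprox F L r p') (p : X) : ‖z‖ ≤ β p + K * dist p p' + r := by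
  rcases eq_or_ne z 0 with rfl | hz0
  · obtain ⟨z₀, hz₀⟩ := hne p'
    linarith [hgrowth p p' z₀ hz₀, norm_nonneg z₀, norm_zero (E := E)]
  have hnorm : 0 < ‖z‖ := norm_pos_iff.2 hz0
  have hv : ‖‖z‖⁻¹ • z‖ = 1 := by rw [norm_smul, norm_inv, norm_norm, inv_mul_cancel₀ hnorm.ne']
  have hzv : ⟪‖z‖⁻¹ • z, z⟫ = ‖z‖ := by
    rw [real_inner_smul_left, real_inner_self_eq_norm_sq, sq, inv_mul_cancel_left₀ hnorm.ne']
  have henv : lipEnvelope (fun q => supportFun (F q) (‖z‖⁻¹ • z)) L p' ≤ β p + K * dist p p' :=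
    lipEnvelope_le fun q => by
      have := supportFun_le_add_mul_dist hne hgrowth le_rfl hv p q
      nlinarith [dist_triangle p p' q,
        mul_le_mul_of_nonneg_right hKL (dist_nonneg (x := p') (y := q))]
  have := mem_lipApprox.1 hz _ hv
  rw [hzv] at this
  linarith

theorem isCompact_lipApprox [ProperSpace E] (hne : ∀ p, (F p).Nonempty)
    (hgrowth : ∀ p q, ∀ z ∈ F q, ‖z‖ ≤ β p + K * dist p q) (hK : 0 ≤ K) (hKL : K ≤ L)
    (hr : 0 ≤ r) (p : X) : IsCompact (lipApprox F L r p) :=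
  (isCompact_closedBall 0 (β p + r)).of_isClosed_subset isClosed_lipApprox fun z hz =>
    mem_closedBall_zero_iff.2 (by simpa using norm_le_of_mem_lipApprox hne hgrowth hK hKL hr hz p)

theorem lipApprox_subset_lipApprox (hne : ∀ p, (F p).Nonempty)
    (hgrowth : ∀ p q, ∀ z ∈ F q, ‖z‖ ≤ β p + K * dist p q) (hKL : K ≤ L) (hLL' : L ≤ L')
    (hrr' : r' ≤ r) : lipApprox F L' r' p ⊆ lipApprox F L r p := fun _ hz =>
  mem_lipApprox.2 fun v hv => (mem_lipApprox.1 hz v hv).trans <|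
    add_le_add (lipEnvelope_anti (supportFun_le_add_mul_dist hne hgrowth hKL hv p) hLL') hrr'

/-- The margin `r` of the support bounds over `F p'` absorbs their change `L * dist p p'`. -/
theorem add_smul_sub_mem_lipApprox (hne : ∀ p, (F p).Nonempty)
    (hgrowth : ∀ p q, ∀ z ∈ F q, ‖z‖ ≤ β p + K * dist p q) (hK : 0 ≤ K) (hKL : K ≤ L)
    (hr : 0 < r) {z₀ : E} (hz : z ∈ lipApprox F L r p') (hz₀ : z₀ ∈ F p')
    (hθ : L * dist p p' ≤ r) : z + (L * dist p p' / r) • (z₀ - z) ∈ lipApprox F L r p := by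
  refine mem_lipApprox.2 fun v hv => ?_
  have hL : 0 ≤ L := hK.trans hKL
  set θ := L * dist p p' / r
  have hθ0 : 0 ≤ θ := by positivity
  have hθ1 : θ ≤ 1 := (div_le_one hr).2 hθ
  have hθr : θ * r = L * dist p p' := div_mul_cancel₀ _ hr.ne'
  have hbound := supportFun_le_add_mul_dist hne hgrowth hKL hv
  have h₀ : ⟪v, z₀⟫ ≤ lipEnvelope (fun q => supportFun (F q) v) L p' :=
    (inner_le_supportFun (fun z hz => by simpa using hgrowth p' p' z hz) hz₀ v).trans
      (le_lipEnvelope (hbound p'))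
  have hlip := lipEnvelope_le_add_dist (p := p') (hbound p) hL
  rw [dist_comm] at hlip
  have h := mem_lipApprox.1 hz v hv
  rw [inner_add_right, inner_smul_right, inner_sub_right]
  nlinarith [mul_le_mul_of_nonneg_left h (sub_nonneg.2 hθ1), mul_le_mul_of_nonneg_left h₀ hθ0]

theorem exists_dist_le_of_mem_lipApprox (hne : ∀ p, (F p).Nonempty)
    (hgrowth : ∀ p q, ∀ z ∈ F q, ‖z‖ ≤ β p + K * dist p q) (hK : 0 ≤ K) (hKL : K ≤ L)
    (hr : 0 < r) (hz : z ∈ lipApprox F L r p') (hθ : L * dist p p' ≤ r) (p₀ : X) :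
    ∃ z' ∈ lipApprox F L r p,
      dist z z' ≤ L * dist p p' / r * (2 * (β p₀ + K * dist p₀ p' + r)) := by
  obtain ⟨z₀, hz₀⟩ := hne p'
  refine ⟨_, add_smul_sub_mem_lipApprox hne hgrowth hK hKL hr hz hz₀ hθ, ?_⟩
  have hL : 0 ≤ L := hK.trans hKL
  rw [dist_eq_norm, sub_add_cancel_left, norm_neg, norm_smul,
    Real.norm_of_nonneg (by positivity)]
  gcongr
  linarith [norm_sub_le z₀ z, hgrowth p₀ p' z₀ hz₀,
    norm_le_of_mem_lipApprox hne hgrowth hK hKL hr.le hz p₀]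

theorem hausdorffEDist_lipApprox_le (hne : ∀ p, (F p).Nonempty)
    (hgrowth : ∀ p q, ∀ z ∈ F q, ‖z‖ ≤ β p + K * dist p q) (hK : 0 ≤ K) (hKL : K ≤ L)
    (hr : 0 < r) (hθ : L * dist p p' ≤ r) :
    hausdorffEDist (lipApprox F L r p') (lipApprox F L r p) ≤
      ENNReal.ofReal (L * dist p p' / r * (2 * (β p + K * dist p p' + r))) := by
  have hL : 0 ≤ L := hK.trans hKL
  refine hausdorffEDist_le_of_mem_edist (fun z hz => ?_) (fun z hz => ?_)
  · obtain ⟨z', hz', h⟩ := exists_dist_le_of_mem_lipApprox hne hgrowth hK hKL hr hz hθ p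
    exact ⟨z', hz', by rw [edist_dist]; exact ENNReal.ofReal_le_ofReal h⟩
  · obtain ⟨z', hz', h⟩ := exists_dist_le_of_mem_lipApprox (p := p') hne hgrowth hK hKL hr hz
      (by rwa [dist_comm]) p
    refine ⟨z', hz', ?_⟩
    rw [edist_dist]
    refine ENNReal.ofReal_le_ofReal (h.trans ?_)
    rw [dist_comm p' p, dist_self, mul_zero, add_zero]
    gcongr
    nlinarith [dist_nonneg (x := p) (y := p')]

theorem tendsto_hausdorffEDist_lipApprox (hne : ∀ p, (F p).Nonempty)
    (hgrowth : ∀ p q, ∀ z ∈ F q, ‖z‖ ≤ β p + K * dist p q) (hK : 0 ≤ K) (hKL : K ≤ L)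
    (hr : 0 < r) (p : X) :
    Tendsto (fun p' => hausdorffEDist (lipApprox F L r p') (lipApprox F L r p)) (𝓝 p) (𝓝 0) := by
  have hd : Tendsto (fun p' => dist p p') (𝓝 p) (𝓝 0) := by
    simpa [dist_comm] using tendsto_iff_dist_tendsto_zero.1 (tendsto_id (x := 𝓝 p))
  have hg : Tendsto (fun t : ℝ => ENNReal.ofReal (L * t / r * (2 * (β p + K * t + r))))
      (𝓝 0) (𝓝 0) := by
    have hc : Continuous fun t : ℝ => L * t / r * (2 * (β p + K * t + r)) := by fun_prop
    exact (ENNReal.continuous_ofReal.comp hc).tendsto' 0 0 (by simp)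
  have hθ : ∀ᶠ p' in 𝓝 p, L * dist p p' ≤ r :=
    (((continuous_const.mul continuous_id).tendsto' 0 0 (by simp)).comp hd).eventually
      (ge_mem_nhds hr)
  exact tendsto_of_tendsto_of_tendsto_of_le_of_le' tendsto_const_nhds (hg.comp hd)
    (Eventually.of_forall fun _ => bot_le)
    (hθ.mono fun p' h => hausdorffEDist_lipApprox_le hne hgrowth hK hKL hr h)

theorem iInter_lipApprox [ProperSpace E] (hgraph : IsClosed {q : X × E | q.2 ∈ F q.1})
    (hne : ∀ p, (F p).Nonempty) (hgrowth : ∀ p q, ∀ z ∈ F q, ‖z‖ ≤ β p + K * dist p q)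
    (hK : 0 ≤ K) (hcv : Convex ℝ (F p)) {L r : ℕ → ℝ} (hKL : ∀ n, K ≤ L n) (hr : ∀ n, 0 ≤ r n)
    (hL : Tendsto L atTop atTop) (hr0 : Tendsto r atTop (𝓝 0)) :
    ⋂ n, lipApprox F (L n) (r n) p = F p := by
  refine Subset.antisymm (fun z hz => ?_)
    (subset_iInter fun n => subset_lipApprox hne hgrowth (hKL n) (hr n) p)
  refine mem_of_forall_inner_le_supportFun (hne p) (isClosed_of_isClosed_graph hgraph p) hcv
    fun v hv => ?_
  have hlim := ((tendsto_lipEnvelope (upperSemicontinuous_supportFun hgraph hne hgrowth hK v p)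
    (supportFun_le_add_mul_dist hne hgrowth le_rfl hv p)).comp hL).add hr0
  rw [add_zero] at hlim
  exact ge_of_tendsto' hlim fun n => mem_lipApprox.1 (mem_iInter.1 hz n) v hv

theorem range_convexProj_smul_lipApprox [CompleteSpace E] (hne : ∀ p, (F p).Nonempty)
    (hgrowth : ∀ p q, ∀ z ∈ F q, ‖z‖ ≤ β p + K * dist p q) (hK : 0 ≤ K) (hKL : K ≤ L)
    (hr : 0 ≤ r) {R : ℝ} (hR : 0 < R) (hβR : β p + r ≤ R) :
    range (fun u : closedBall (0 : E) 1 => convexProj (lipApprox F L r p) (R • (u : E))) =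
      lipApprox F L r p := by
  refine range_convexProj_smul ((hne p).mono (subset_lipApprox hne hgrowth hKL hr p))
    isClosed_lipApprox convex_lipApprox hR fun z hz => mem_closedBall_zero_iff.2 ?_
  have := norm_le_of_mem_lipApprox hne hgrowth hK hKL hr hz p
  rw [dist_self, mul_zero, add_zero] at this
  linarith

theorem continuous_convexProj_smul_lipApprox [CompleteSpace E] (hne : ∀ p, (F p).Nonempty)
    (hgrowth : ∀ p q, ∀ z ∈ F q, ‖z‖ ≤ β p + K * dist p q) (hK : 0 ≤ K) (hKL : K ≤ L)
    (hr : 0 < r) {R : X → ℝ} (hR : Continuous R) :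
    Continuous fun q : X × closedBall (0 : E) 1 =>
      convexProj (lipApprox F L r q.1) (R q.1 • (q.2 : E)) :=
  (continuous_convexProj (fun p => (hne p).mono (subset_lipApprox hne hgrowth hKL hr.le p))
    (fun _ => isClosed_lipApprox) (fun _ => convex_lipApprox)
    (tendsto_hausdorffEDist_lipApprox hne hgrowth hK hKL hr)).comp
    (f := fun q : X × closedBall (0 : E) 1 => (q.1, R q.1 • (q.2 : E))) (by fun_prop)

end LipschitzApproximation

theorem isClosed_setOf_mem_uncurry_of_seq {Y S E : Type*} [PseudoMetricSpace Y]
    [PseudoMetricSpace S] [PseudoMetricSpace E] {H : Y → S → Set E}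
    (hH : ∀ (x : Y) (s : S) (xn : ℕ → Y) (sn : ℕ → S) (zn : ℕ → E) (z : E),
      Tendsto xn atTop (𝓝 x) → Tendsto sn atTop (𝓝 s) →
      (∀ n, zn n ∈ H (xn n) (sn n)) → Tendsto zn atTop (𝓝 z) → z ∈ H x s) :
    IsClosed {q : (Y × S) × E | q.2 ∈ Function.uncurry H q.1} :=
  IsSeqClosed.isClosed fun _ _ hq ha =>
    hH _ _ _ _ _ _ ha.fst_nhds.fst_nhds ha.fst_nhds.snd_nhds hq ha.snd_nhds

theorem norm_le_of_mem_uncurry {Y S E : Type*} [SeminormedAddCommGroup Y] [PseudoMetricSpace S]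
    [SeminormedAddCommGroup E] {H : Y → S → Set E} {K : ℝ} (hK : 0 ≤ K)
    (hbd : ∀ x s, ∀ z ∈ H x s, ‖z‖ ≤ K * (1 + ‖x‖)) (p q : Y × S) :
    ∀ z ∈ Function.uncurry H q, ‖z‖ ≤ K * (1 + ‖p.1‖) + K * dist p q := fun z hz => by
  have hdist : ‖q.1 - p.1‖ ≤ dist p q := by
    rw [← dist_eq_norm, dist_comm, Prod.dist_eq]
    exact le_max_left _ _
  nlinarith [hbd q.1 q.2 z hz, norm_le_insert' q.1 p.1]

theorem stmt_3_general {d : ℕ} {S : Type*} [MetricSpace S]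
    (H : Euc d → S → Set (Euc d))
    (hA1i : ∀ (x : Euc d) (s : S),
      (H x s).Nonempty ∧ IsCompact (H x s) ∧ Convex ℝ (H x s))
    (hA1ii : ∃ K > (0 : ℝ), ∀ (x : Euc d) (s : S), ∀ z ∈ H x s, ‖z‖ ≤ K * (1 + ‖x‖))
    (hA1iii : ∀ (x : Euc d) (s : S) (xn : ℕ → Euc d) (sn : ℕ → S)
      (zn : ℕ → Euc d) (z : Euc d),
      Tendsto xn atTop (𝓝 x) → Tendsto sn atTop (𝓝 s) →
      (∀ n, zn n ∈ H (xn n) (sn n)) → Tendsto zn atTop (𝓝 z) → z ∈ H x s) :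
    ∃ hl : ℕ → Euc d → S → (Metric.closedBall (0 : Euc d) 1) → Euc d,
      (∀ l, Continuous (fun p : Euc d × S × (Metric.closedBall (0 : Euc d) 1) =>
        hl l p.1 p.2.1 p.2.2)) ∧
      (∀ l (x : Euc d) (s : S),
        Convex ℝ (Set.range (hl l x s)) ∧ IsCompact (Set.range (hl l x s))) ∧
      (∀ l (x : Euc d) (s : S),
        H x s ⊆ Set.range (hl (l + 1) x s) ∧
        Set.range (hl (l + 1) x s) ⊆ Set.range (hl l x s)) ∧
      (∀ l, ∃ Kl > (0 : ℝ), ∀ (x : Euc d) (s : S) (u : Metric.closedBall (0 : Euc d) 1),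
        ‖hl l x s u‖ ≤ Kl * (1 + ‖x‖)) ∧
      (∀ (x : Euc d) (s : S), H x s = ⋂ l, Set.range (hl l x s)) := by
  obtain ⟨K, hK, hbd⟩ := hA1ii
  set F := Function.uncurry H
  have hne : ∀ p, (F p).Nonempty := fun p => (hA1i p.1 p.2).1
  have hgrowth := norm_le_of_mem_uncurry hK.le hbd
  have hKL (l : ℕ) : K ≤ K + l := le_add_of_nonneg_right l.cast_nonneg
  have hr (l : ℕ) : (0 : ℝ) < (1 / 2) ^ l := by positivity
  have hr1 (l : ℕ) : (1 / 2 : ℝ) ^ l ≤ 1 := pow_le_one₀ (by norm_num) (by norm_num)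
  set C : ℕ → Euc d × S → Set (Euc d) := fun l => lipApprox F (K + l) ((1 / 2) ^ l)
  have hrange l x s : range (fun u : closedBall (0 : Euc d) 1 =>
      convexProj (C l (x, s)) ((K * (1 + ‖x‖) + 1) • (u : Euc d))) = C l (x, s) :=
    range_convexProj_smul_lipApprox hne hgrowth hK.le (hKL l) (hr l).le (by positivity)
      (by dsimp only; linarith [hr1 l])
  refine ⟨fun l x s u => convexProj (C l (x, s)) ((K * (1 + ‖x‖) + 1) • (u : Euc d)),
    fun l => ?_, fun l x s => ?_, fun l x s => ?_, fun l => ⟨K + 1, by linarith, fun x s u => ?_⟩,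
    fun x s => ?_⟩
  · exact (continuous_convexProj_smul_lipApprox hne hgrowth hK.le (hKL l) (hr l)
      (R := fun p : Euc d × S => K * (1 + ‖p.1‖) + 1) (by fun_prop)).comp
      (f := fun p : Euc d × S × closedBall (0 : Euc d) 1 => ((p.1, p.2.1), p.2.2)) (by fun_prop)
  · rw [hrange]
    exact ⟨convex_lipApprox, isCompact_lipApprox hne hgrowth hK.le (hKL l) (hr l).le _⟩
  · rw [hrange, hrange]
    exact ⟨subset_lipApprox hne hgrowth (hKL _) (hr _).le (x, s),
      lipApprox_subset_lipApprox hne hgrowth (hKL l) (by push_cast; linarith)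
        (pow_le_pow_of_le_one (by norm_num) (by norm_num) l.le_succ)⟩
  · have := norm_le_of_mem_lipApprox hne hgrowth hK.le (hKL l) (hr l).le
      ((hrange l x s).subset ⟨u, rfl⟩) (x, s)
    rw [dist_self, mul_zero, add_zero] at this
    nlinarith [norm_nonneg x, hr1 l]
  · simp_rw [hrange]
    exact (iInter_lipApprox (p := (x, s)) (isClosed_setOf_mem_uncurry_of_seq hA1iii) hne hgrowth
      hK.le (hA1i x s).2.2 hKL (fun l => (hr l).le)
      (tendsto_atTop_add_const_left _ K tendsto_natCast_atTop_atTop)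
      (tendsto_pow_atTop_nhds_zero_of_lt_one (by norm_num) (by norm_num))).symm

/-- approximation theorem — a set-valued map satisfying (A1) is the
decreasing intersection of images of continuous single-valued parametrizations. -/
theorem stmt_3 {d : ℕ} {S : Type*} [MetricSpace S] [CompactSpace S]
    (H : Euc d → S → Set (Euc d))
    (hA1i : ∀ (x : Euc d) (s : S),
      (H x s).Nonempty ∧ IsCompact (H x s) ∧ Convex ℝ (H x s))
    (hA1ii : ∃ K > (0 : ℝ), ∀ (x : Euc d) (s : S), ∀ z ∈ H x s, ‖z‖ ≤ K * (1 + ‖x‖))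
    (hA1iii : ∀ (x : Euc d) (s : S) (xn : ℕ → Euc d) (sn : ℕ → S)
      (zn : ℕ → Euc d) (z : Euc d),
      Tendsto xn atTop (𝓝 x) → Tendsto sn atTop (𝓝 s) →
      (∀ n, zn n ∈ H (xn n) (sn n)) → Tendsto zn atTop (𝓝 z) → z ∈ H x s) :
    ∃ hl : ℕ → Euc d → S → (Metric.closedBall (0 : Euc d) 1) → Euc d,
      (∀ l, Continuous (fun p : Euc d × S × (Metric.closedBall (0 : Euc d) 1) =>
        hl l p.1 p.2.1 p.2.2)) ∧
      (∀ l (x : Euc d) (s : S),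
        Convex ℝ (Set.range (hl l x s)) ∧ IsCompact (Set.range (hl l x s))) ∧
      (∀ l (x : Euc d) (s : S),
        H x s ⊆ Set.range (hl (l + 1) x s) ∧
        Set.range (hl (l + 1) x s) ⊆ Set.range (hl l x s)) ∧
      (∀ l, ∃ Kl > (0 : ℝ), ∀ (x : Euc d) (s : S) (u : Metric.closedBall (0 : Euc d) 1),
        ‖hl l x s u‖ ≤ Kl * (1 + ‖x‖)) ∧
      (∀ (x : Euc d) (s : S), H x s = ⋂ l, Set.range (hl l x s)) :=
  stmt_3_general H hA1i hA1ii hA1iii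
end

section
/- Let (S, d_S) be a compact metric space, U the closed unit ball of ℝ^d, and h : S × U → ℝ^d a continuous function such that for every s ∈ S the set G(s) := h(s,U) = {h(s,u) : u ∈ U} is a convex and compact subset of ℝ^d. Then for every Borel probability measure μ on S, the Aumann integral of G satisfies ∫_S G(s) μ(ds) = { ∫_{S×U} h(s,u) ν(ds,du) : ν a Borel probability measure on S × U whose marginal on S equals μ }. -/
/-!
For `⊇`, disintegrate `ν = μ ⊗ κ`: the barycentre `s ↦ ∫ h(s,u) κ_s(du)` is a measurable
selection of the convex closed sets `G(s)`, and its `μ`-integral is `∫ h dν`.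

For `⊆`, a measurable selection `f` of `G` is lifted to a measurable `g : S → U` with
`h(s, g s) = f s`, and `ν` is the image of `μ` under `s ↦ (s, g s)`. The lift is built as in the
Kuratowski–Ryll-Nardzewski theorem: whether `h(s, ·)` hits `f s` on a closed ball is a measurable
condition on `s` (it can be tested on a countable dense subset of the ball), so measurable
approximate lifts can be refined along a dense sequence of `U` at geometrically shrinking radii,
and they converge pointwise to a lift.
-/

open Filter Topology MeasureTheory

open Metric Set TopologicalSpace

lemma measurableSet_setOf_mem_image {S K E : Type*} [TopologicalSpace S] [MeasurableSpace S]
    [OpensMeasurableSpace S] [PseudoMetricSpace K] [MetricSpace E] [MeasurableSpace E]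
    [BorelSpace E] [SecondCountableTopology E] {h : S → K → E}
    (hc : Continuous fun p : S × K ↦ h p.1 p.2) {f : S → E} (hf : Measurable f) {C : Set K}
    (hC : IsCompact C) : MeasurableSet {s | f s ∈ h s '' C} := by
  obtain ⟨T, hTC, hT, hCT⟩ := hC.isSeparable.exists_countable_dense_subset
  have himage : ∀ s, h s '' C = closure (h s '' T) := fun s ↦
    have hcs : Continuous (h s) := hc.comp (.prodMk_right s)
    (image_mono hCT |>.trans (image_closure_subset_closure_image hcs)).antisymm
      ((hC.image hcs).isClosed.closure_subset_iff.2 (image_mono hTC))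
  have hset : {s | f s ∈ h s '' C} = (fun s ↦ ⨅ t ∈ T, edist (f s) (h s t)) ⁻¹' {0} := by
    ext s
    simp only [mem_ofPred_eq, himage, mem_closure_iff_infEDist_zero, infEDist, iInf_image,
      mem_preimage, mem_singleton_iff]
  rw [hset]
  refine Measurable.biInf T hT (fun t _ ↦ hf.edist ?_) (measurableSet_singleton 0)
  exact (hc.comp (continuous_id.prodMk continuous_const)).measurable

section Selection

variable {S K : Type*} [MeasurableSpace S] [MetricSpace K] [Nonempty K] [MeasurableSpace K]
  [BorelSpace K]

lemma exists_measurable_approx_selection_refine [SeparableSpace K] {F : S → Set K}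
    (hF : ∀ k r, MeasurableSet {s | (F s ∩ closedBall k r).Nonempty})
    {c : S → K} (hc : Measurable c) {r r' : ℝ} (hr' : 0 < r')
    (hcF : ∀ s, (F s ∩ closedBall (c s) r).Nonempty) :
    ∃ c' : S → K, Measurable c' ∧ (∀ s, (F s ∩ closedBall (c' s) r').Nonempty) ∧
      ∀ s, dist (c' s) (c s) ≤ r + r' := by
  classical
  set D := denseSeq K
  let P : ℕ → S → Prop := fun k s ↦
    dist (D k) (c s) ≤ r + r' ∧ (F s ∩ closedBall (D k) r').Nonempty
  have hP : ∀ s, ∃ k, P k s := by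
    intro s
    obtain ⟨u, huF, hu⟩ := hcF s
    obtain ⟨k, hk⟩ := denseRange_iff.1 (denseRange_denseSeq K) u r' hr'
    refine ⟨k, ?_, u, huF, hk.le⟩
    calc dist (D k) (c s) ≤ dist u (D k) + dist u (c s) := dist_triangle_left _ _ _
      _ ≤ r + r' := by rw [add_comm]; exact add_le_add hu hk.le
  have hPm : ∀ k, MeasurableSet {s | P k s} := fun k ↦
    (measurableSet_le ((continuous_const.dist continuous_id).measurable.comp hc)
      measurable_const).inter (hF (D k) r')
  exact ⟨fun s ↦ D (Nat.find (hP s)), Measurable.find (fun _ ↦ measurable_const) hPm hP,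
    fun s ↦ (Nat.find_spec (hP s)).2, fun s ↦ (Nat.find_spec (hP s)).1⟩

theorem exists_measurable_forall_mem [CompactSpace K] {F : S → Set K}
    (hclosed : ∀ s, IsClosed (F s)) (hne : ∀ s, (F s).Nonempty)
    (hF : ∀ k r, MeasurableSet {s | (F s ∩ closedBall k r).Nonempty}) :
    ∃ g : S → K, Measurable g ∧ ∀ s, g s ∈ F s := by
  set R := diam (univ : Set K) + 1
  have hR : 0 < R := by positivity
  set ρ : ℕ → ℝ := fun n ↦ R * (1 / 2) ^ n
  have hρ : Tendsto ρ atTop (𝓝 0) := by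
    simpa [ρ] using (tendsto_pow_atTop_nhds_zero_of_lt_one (by norm_num : (0 : ℝ) ≤ 1 / 2)
      (by norm_num)).const_mul R
  let Approx : ℕ → Type _ := fun n ↦
    {c : S → K // Measurable c ∧ ∀ s, (F s ∩ closedBall (c s) (ρ n)).Nonempty}
  have base : Approx 0 := by
    refine ⟨fun _ ↦ Classical.arbitrary K, measurable_const, fun s ↦ ?_⟩
    obtain ⟨u, hu⟩ := hne s
    refine ⟨u, hu, (dist_le_diam_of_mem isCompact_univ.isBounded trivial trivial).trans ?_⟩
    simp [ρ, R]
  have step : ∀ n (c : Approx n), ∃ c' : Approx (n + 1),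
      ∀ s, dist (c'.1 s) (c.1 s) ≤ ρ n + ρ (n + 1) := fun n c ↦
    let ⟨c', hc'm, hc'F, hc'c⟩ :=
      exists_measurable_approx_selection_refine hF c.2.1 (by positivity) c.2.2
    ⟨⟨c', hc'm, hc'F⟩, hc'c⟩
  choose next hnext using step
  let c : ∀ n, Approx n := fun n ↦ Nat.rec base next n
  have hcauchy : ∀ s, CauchySeq fun n ↦ (c n).1 s := fun s ↦
    cauchySeq_of_le_geometric (1 / 2) (3 / 2 * R) (by norm_num) fun n ↦ by
      rw [dist_comm]
      exact (hnext n (c n) s).trans_eq (by ring)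
  choose g hg using fun s ↦ cauchySeq_tendsto_of_complete (hcauchy s)
  refine ⟨g, measurable_of_tendsto_metrizable (fun n ↦ (c n).2.1) (tendsto_pi_nhds.2 hg),
    fun s ↦ ?_⟩
  choose u huF hu using fun n ↦ (c n).2.2 s
  have hdist : Tendsto (fun n ↦ dist ((c n).1 s) (u n)) atTop (𝓝 0) :=
    squeeze_zero (fun _ ↦ dist_nonneg) (fun n ↦ by rw [dist_comm]; exact hu n) hρ
  exact (hclosed s).mem_of_tendsto ((hg s).congr_dist hdist) (.of_forall huF)

end Selection

lemma MeasureTheory.Measure.exists_measurable_mem_integral_eq {S K E : Type*}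
    [MeasurableSpace S] [MeasurableSpace K] [StandardBorelSpace K] [Nonempty K]
    [NormedAddCommGroup E] [NormedSpace ℝ E] [CompleteSpace E] [MeasurableSpace E] [BorelSpace E]
    (ν : Measure (S × K)) [IsFiniteMeasure ν] {h : S → K → E}
    (hm : StronglyMeasurable fun p : S × K ↦ h p.1 p.2) {C : ℝ} (hC : ∀ s u, ‖h s u‖ ≤ C)
    {G : S → Set E} (hGconv : ∀ s, Convex ℝ (G s)) (hGclosed : ∀ s, IsClosed (G s))
    (hG : ∀ s u, h s u ∈ G s) :
    ∃ f : S → E, Measurable f ∧ Integrable f ν.fst ∧ (∀ s, f s ∈ G s) ∧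
      ∫ p, h p.1 p.2 ∂ν = ∫ s, f s ∂ν.fst := by
  have hint : ∀ {μ : Measure K} [IsFiniteMeasure μ] (s : S), Integrable (h s) μ := fun s ↦
    .of_bound (hm.comp_measurable measurable_prodMk_left).aestronglyMeasurable C
      (.of_forall (hC s))
  have hfm : StronglyMeasurable fun s ↦ ∫ u, h s u ∂ν.condKernel s :=
    hm.integral_kernel_prod_right'
  refine ⟨fun s ↦ ∫ u, h s u ∂ν.condKernel s, hfm.measurable,
    .of_bound hfm.aestronglyMeasurable C (.of_forall fun s ↦ ?_),
    fun s ↦ (hGconv s).integral_mem (hGclosed s) (.of_forall (hG s)) (hint s),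
    (ν.integral_condKernel (.of_bound hm.aestronglyMeasurable C (.of_forall fun p ↦ hC _ _))).symm⟩
  simpa using norm_integral_le_of_norm_le_const (μ := ν.condKernel s) (.of_forall (hC s))

/-- characterization of the Aumann integral of a parametrized set-valued
map `G(s) = h(s,U)` in terms of probability measures on `S × U` with prescribed
marginal on `S`. -/
theorem stmt_6 {d : ℕ} {S : Type*} [MetricSpace S] [CompactSpace S]
    [MeasurableSpace S] [BorelSpace S]
    (h : S → (Metric.closedBall (0 : Euc d) 1) → Euc d)
    (hc : Continuous (fun p : S × (Metric.closedBall (0 : Euc d) 1) => h p.1 p.2))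
    (hval : ∀ s : S, Convex ℝ (Set.range (h s)) ∧ IsCompact (Set.range (h s)))
    (μ : Measure S) [IsProbabilityMeasure μ] :
    {z : Euc d | ∃ f : S → Euc d, Measurable f ∧ Integrable f μ ∧
      (∀ s, f s ∈ Set.range (h s)) ∧ z = ∫ s, f s ∂μ} =
    {z : Euc d | ∃ ν : Measure (S × (Metric.closedBall (0 : Euc d) 1)),
      IsProbabilityMeasure ν ∧ ν.map Prod.fst = μ ∧ z = ∫ p, h p.1 p.2 ∂ν} := by
  ext z
  constructor
  · rintro ⟨f, hfm, -, hfh, rfl⟩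
    obtain ⟨g, hgm, hg⟩ := exists_measurable_forall_mem (F := fun s ↦ h s ⁻¹' {f s})
      (fun s ↦ isClosed_singleton.preimage (hc.comp (.prodMk_right s))) hfh fun k r ↦ by
        simpa [Set.Nonempty, and_comm] using
          measurableSet_setOf_mem_image hc hfm (isCompact_closedBall k r)
    have hgraph : Measurable fun s ↦ (s, g s) := measurable_id.prodMk hgm
    refine ⟨μ.map fun s ↦ (s, g s), Measure.isProbabilityMeasure_map hgraph.aemeasurable, ?_, ?_⟩
    · rw [Measure.map_map measurable_fst hgraph]
      exact Measure.map_id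
    · rw [integral_map hgraph.aemeasurable hc.aestronglyMeasurable]
      exact integral_congr_ae (.of_forall fun s ↦ (hg s).symm)
  · rintro ⟨ν, hν, rfl, rfl⟩
    obtain ⟨C, hC⟩ := (isCompact_range hc).isBounded.exists_norm_le
    exact ν.exists_measurable_mem_integral_eq hc.stronglyMeasurable
      (fun s u ↦ hC _ ⟨(s, u), rfl⟩) (fun s ↦ (hval s).1) (fun s ↦ (hval s).2.isClosed)
      (fun s u ↦ mem_range_self u)
end

section
/- Let (Ω, 𝓕, ℙ) be a probability space, (S, d_S) a compact metric space, U the closed unit ball of ℝ^d, and h : ℝ^d × S × U → ℝ^d a continuous function. Let X : Ω → ℝ^d, Y : Ω → S and V : Ω → ℝ^d be measurable and suppose that for every ω ∈ Ω, V(ω) ∈ h(X(ω), Y(ω), U) := {h(X(ω),Y(ω),u) : u ∈ U}. Then there exists a measurable function u : Ω → U such that for every ω ∈ Ω, h(X(ω), Y(ω), u(ω)) = V(ω). -/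
open Filter Topology MeasureTheory

/-- General measurable selection lemma on a compact metric space. -/
lemma aux_selection {Ω : Type*} [MeasurableSpace Ω] {E : Type*} [MetricSpace E]
    [CompactSpace E] [SecondCountableTopology E] [Nonempty E]
    [MeasurableSpace E] [BorelSpace E]
    (F : Ω → E → ℝ)
    (hcont : ∀ ω, Continuous (F ω))
    (hne : ∀ ω, ∃ u, F ω u = 0)
    (hmeas : ∀ (c : E) (r : ℝ), MeasurableSet {ω | ∃ u, F ω u = 0 ∧ dist u c ≤ r}) :
    ∃ u : Ω → E, Measurable u ∧ ∀ ω, F ω (u ω) = 0 := by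
  classical
  have hcomp : CompleteSpace E := complete_of_compact
  set e : ℕ → E := TopologicalSpace.denseSeq E with he_def
  have he : DenseRange e := TopologicalSpace.denseRange_denseSeq E
  have hdense : ∀ (w : E) (ε : ℝ), 0 < ε → ∃ n, dist (e n) w ≤ ε := by
    intro w ε hε
    obtain ⟨n, hn⟩ := Metric.denseRange_iff.1 he w ε hε
    exact ⟨n, by rw [dist_comm]; exact hn.le⟩
  set A : ℕ → E → Set Ω := fun k c => {ω | ∃ u, F ω u = 0 ∧ dist u c ≤ (1/2 : ℝ)^k} with hA_def
  have hA : ∀ k c, MeasurableSet (A k c) := fun k c => hmeas c _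
  -- base step
  have hex0 : ∀ ω, ∃ n, ω ∈ A 0 (e n) := by
    intro ω
    obtain ⟨u, hu⟩ := hne ω
    obtain ⟨n, hn⟩ := hdense u 1 one_pos
    exact ⟨n, u, hu, by rw [dist_comm]; simpa using hn⟩
  let base : {g : Ω → ℕ // Measurable g ∧ ∀ ω, ω ∈ A 0 (e (g ω))} :=
    ⟨fun ω => Nat.find (hex0 ω), measurable_find hex0 (fun n => hA 0 (e n)),
      fun ω => Nat.find_spec (hex0 ω)⟩
  -- inductive step
  have step : ∀ (k : ℕ) (p : {g : Ω → ℕ // Measurable g ∧ ∀ ω, ω ∈ A k (e (g ω))}),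
      {g : Ω → ℕ // (Measurable g ∧ ∀ ω, ω ∈ A (k+1) (e (g ω))) ∧
        ∀ ω, dist (e (g ω)) (e (p.1 ω)) ≤ (1/2 : ℝ)^k + (1/2 : ℝ)^(k+1)} := by
    intro k p
    have hex : ∀ ω, ∃ n, ω ∈ A (k+1) (e n) ∧
        dist (e n) (e (p.1 ω)) ≤ (1/2 : ℝ)^k + (1/2 : ℝ)^(k+1) := by
      intro ω
      obtain ⟨u, hu0, hud⟩ := p.2.2 ω
      obtain ⟨n, hn⟩ := hdense u ((1/2 : ℝ)^(k+1)) (by positivity)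
      refine ⟨n, ⟨u, hu0, by rw [dist_comm]; exact hn⟩, ?_⟩
      calc dist (e n) (e (p.1 ω)) ≤ dist (e n) u + dist u (e (p.1 ω)) := dist_triangle _ _ _
        _ ≤ (1/2 : ℝ)^(k+1) + (1/2 : ℝ)^k := add_le_add hn hud
        _ = (1/2 : ℝ)^k + (1/2 : ℝ)^(k+1) := by ring
    refine ⟨fun ω => Nat.find (hex ω), ⟨measurable_find hex (fun n => ?_),
      fun ω => (Nat.find_spec (hex ω)).1⟩, fun ω => (Nat.find_spec (hex ω)).2⟩
    have : {ω | ω ∈ A (k+1) (e n) ∧ dist (e n) (e (p.1 ω)) ≤ (1/2:ℝ)^k + (1/2:ℝ)^(k+1)}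
        = A (k+1) (e n) ∩ p.1 ⁻¹' {m | dist (e n) (e m) ≤ (1/2:ℝ)^k + (1/2:ℝ)^(k+1)} := rfl
    rw [this]
    exact (hA _ _).inter (p.2.1 (by trivial))
  let G : ∀ k : ℕ, {g : Ω → ℕ // Measurable g ∧ ∀ ω, ω ∈ A k (e (g ω))} :=
    fun k => Nat.rec base (fun k p => ⟨(step k p).1, (step k p).2.1⟩) k
  have hGstep : ∀ k ω, dist (e ((G (k+1)).1 ω)) (e ((G k).1 ω))
      ≤ (1/2 : ℝ)^k + (1/2 : ℝ)^(k+1) := fun k ω => (step k (G k)).2.2 ω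
  set g : ℕ → Ω → E := fun k ω => e ((G k).1 ω) with hg_def
  have hgmeas : ∀ k, Measurable (g k) := fun k => measurable_from_top.comp (G k).2.1
  have hgA : ∀ k ω, ∃ u, F ω u = 0 ∧ dist u (g k ω) ≤ (1/2 : ℝ)^k := fun k ω => (G k).2.2 ω
  have hcauchy : ∀ ω, CauchySeq (fun k => g k ω) := by
    intro ω
    apply cauchySeq_of_le_geometric (1/2 : ℝ) 2 (by norm_num)
    intro k
    rw [dist_comm]
    calc dist (g (k+1) ω) (g k ω) ≤ (1/2 : ℝ)^k + (1/2 : ℝ)^(k+1) := hGstep k ω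
      _ ≤ 2 * (1/2 : ℝ)^k := by
          have : (1/2 : ℝ)^(k+1) ≤ (1/2 : ℝ)^k := by
            apply pow_le_pow_of_le_one <;> norm_num
          linarith
  set u : Ω → E := fun ω => limUnder atTop (fun k => g k ω) with hu_def
  have hut : ∀ ω, Tendsto (fun k => g k ω) atTop (𝓝 (u ω)) :=
    fun ω => (hcauchy ω).tendsto_limUnder
  refine ⟨u, measurable_of_tendsto_metrizable hgmeas (tendsto_pi_nhds.2 hut), ?_⟩
  intro ω
  choose w hw0 hwd using fun k => hgA k ω
  have hwt : Tendsto w atTop (𝓝 (u ω)) := by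
    rw [tendsto_iff_dist_tendsto_zero]
    apply squeeze_zero (fun k => dist_nonneg)
      (g := fun k => (1/2 : ℝ)^k + dist (g k ω) (u ω))
    · intro k
      calc dist (w k) (u ω) ≤ dist (w k) (g k ω) + dist (g k ω) (u ω) := dist_triangle _ _ _
        _ ≤ (1/2 : ℝ)^k + dist (g k ω) (u ω) := add_le_add (hwd k) le_rfl
    · have h1 : Tendsto (fun k : ℕ => (1/2 : ℝ)^k) atTop (𝓝 0) :=
        tendsto_pow_atTop_nhds_zero_of_lt_one (by norm_num) (by norm_num)
      have h2 : Tendsto (fun k => dist (g k ω) (u ω)) atTop (𝓝 0) :=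
        tendsto_iff_dist_tendsto_zero.mp (hut ω)
      simpa using h1.add h2
  have hlim : Tendsto (fun k => F ω (w k)) atTop (𝓝 (F ω (u ω))) :=
    ((hcont ω).tendsto (u ω)).comp hwt
  have hzero : Tendsto (fun k => F ω (w k)) atTop (𝓝 0) := by
    simp only [hw0]; exact tendsto_const_nhds
  exact tendsto_nhds_unique hlim hzero

/-- measurable selection for a continuous parametrization: if
`V(ω) ∈ h(X(ω), Y(ω), U)` for every `ω`, there is a measurable `u : Ω → U` with
`h(X(ω), Y(ω), u(ω)) = V(ω)` for every `ω`. -/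
theorem stmt_12 {d : ℕ} {Ω : Type*} [MeasurableSpace Ω]
    (P : Measure Ω) [IsProbabilityMeasure P]
    {S : Type*} [MetricSpace S] [CompactSpace S] [MeasurableSpace S] [BorelSpace S]
    (h : Euc d → S → (Metric.closedBall (0 : Euc d) 1) → Euc d)
    (hc : Continuous (fun p : Euc d × S × (Metric.closedBall (0 : Euc d) 1) =>
      h p.1 p.2.1 p.2.2))
    (X : Ω → Euc d) (Y : Ω → S) (V : Ω → Euc d)
    (hX : Measurable X) (hY : Measurable Y) (hV : Measurable V)
    (hmem : ∀ ω : Ω, V ω ∈ Set.range (h (X ω) (Y ω))) :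
    ∃ u : Ω → (Metric.closedBall (0 : Euc d) 1), Measurable u ∧
      ∀ ω : Ω, h (X ω) (Y ω) (u ω) = V ω := by
  classical
  haveI : CompactSpace (Metric.closedBall (0 : Euc d) 1) :=
    isCompact_iff_compactSpace.mp (isCompact_closedBall 0 1)
  haveI : Nonempty (Metric.closedBall (0 : Euc d) 1) :=
    ⟨⟨0, Metric.mem_closedBall_self (by norm_num)⟩⟩
  set F : Ω → (Metric.closedBall (0 : Euc d) 1) → ℝ := fun ω u => dist (h (X ω) (Y ω) u) (V ω) with hF_def
  have hcontF : ∀ ω, Continuous (F ω) := by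
    intro ω
    have hmap : Continuous fun u : (Metric.closedBall (0 : Euc d) 1) =>
        ((X ω, (Y ω, u)) : Euc d × S × (Metric.closedBall (0 : Euc d) 1)) :=
      continuous_const.prodMk (continuous_const.prodMk continuous_id)
    exact (hc.comp hmap).dist continuous_const
  have hneF : ∀ ω, ∃ u, F ω u = 0 := by
    intro ω
    obtain ⟨u, hu⟩ := hmem ω
    exact ⟨u, by simp [hF_def, hu]⟩
  have hmeasF : ∀ (c : (Metric.closedBall (0 : Euc d) 1)) (r : ℝ), MeasurableSet {ω | ∃ u, F ω u = 0 ∧ dist u c ≤ r} := by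
    intro c r
    set C : Set (Euc d × S × Euc d) :=
      {z | ∃ u : (Metric.closedBall (0 : Euc d) 1), h z.1 z.2.1 u = z.2.2 ∧ dist u c ≤ r}
      with hC_def
    have hK : IsClosed {p : (Euc d × S × Euc d) × (Metric.closedBall (0 : Euc d) 1) |
        h p.1.1 p.1.2.1 p.2 = p.1.2.2 ∧ dist p.2 c ≤ r} := by
      apply IsClosed.inter
      · apply isClosed_eq
        · have hmap : Continuous fun p : (Euc d × S × Euc d) × (Metric.closedBall (0 : Euc d) 1) =>
              ((p.1.1, (p.1.2.1, p.2)) : Euc d × S × (Metric.closedBall (0 : Euc d) 1)) :=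
            (continuous_fst.fst).prodMk ((continuous_fst.snd.fst).prodMk continuous_snd)
          exact hc.comp hmap
        · exact continuous_fst.snd.snd
      · exact isClosed_le (continuous_snd.dist continuous_const) continuous_const
    have hCclosed : IsClosed C := by
      have : C = Prod.fst '' {p : (Euc d × S × Euc d) × (Metric.closedBall (0 : Euc d) 1) |
          h p.1.1 p.1.2.1 p.2 = p.1.2.2 ∧ dist p.2 c ≤ r} := by
        ext z
        constructor
        · rintro ⟨u, h1, h2⟩; exact ⟨(z, u), ⟨h1, h2⟩, rfl⟩
        · rintro ⟨⟨z', u⟩, ⟨h1, h2⟩, rfl⟩; exact ⟨u, h1, h2⟩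
      rw [this]
      exact isClosedMap_fst_of_compactSpace _ hK
    have hset : {ω | ∃ u, F ω u = 0 ∧ dist u c ≤ r}
        = (fun ω => (X ω, Y ω, V ω)) ⁻¹' C := by
      ext ω
      simp only [Set.mem_setOf_eq, Set.mem_preimage, hC_def, hF_def, dist_eq_zero]
    rw [hset]
    exact (hX.prodMk (hY.prodMk hV)) hCclosed.measurableSet
  obtain ⟨u, humeas, hu⟩ := aux_selection F hcontF hneF hmeasF
  exact ⟨u, humeas, fun ω => dist_eq_zero.mp (hu ω)⟩
end

section
/- Let (S, d_S) be a compact metric space, U the closed unit ball of ℝ^d, h : ℝ^d × S × U → ℝ^d continuous, and {a(n)}_{n≥0} real numbers with a(0) ≤ 1, a(n) ≥ a(n+1) > 0, Σ a(n) = ∞ and Σ a(n)² < ∞. Let x_n ∈ ℝ^d, s_n ∈ S, u_n ∈ U, m_{n+1} ∈ ℝ^d satisfy x_{n+1} = x_n + a(n)(h(x_n,s_n,u_n) + m_{n+1}) for all n ≥ 0, with sup_n ‖x_n‖ < ∞, and assume for every T > 0, lim_{n→∞} sup_{n ≤ k ≤ τ(n,T)} ‖Σ_{j=n}^{k} a(j)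 m_{j+1}‖ = 0, where τ(n,T) := min{m > n : Σ_{k=n}^{m-1} a(k) ≥ T}. Set t(0) := 0, t(n) := Σ_{k=0}^{n-1} a(k), let x̄ : [0,∞) → ℝ^d be the piecewise linear interpolation with x̄(t(n)) = x_n, and for t̃ ≥ 0 let x̃(·; t̃) be the solution on [0,∞) of dx̃(q;t̃)/dq = h(x_{[t̃+q]}, s_{[t̃+q]}, u_{[t̃+q]}) with x̃(0;t̃) = x̄(t̃), where [t] := max{n ≥ 0 : t(n) ≤ t}. Then for every T > 0, lim_{t→∞} sup_{0 ≤ q ≤ T} ‖x̄(t+q) − x̃(q;t)‖ = 0. -/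
open Filter Topology MeasureTheory

/-! The o.d.e. solution `x̃(·; t̃)` integrates exactly the drift `h(x_n, s_n, u_n)` used by the
iterates, so `x̄` and `x̃` differ only by accumulated noise:
`x̄(t̃ + q) - x̃(q; t̃) = W(t̃ + q) - W(t̃)`, where `W` interpolates the partial sums
`∑_{j<n} a(j) m_{j+1}` linearly between the times `t(n)`. Over a window of length `T` this
increment is one noise block `∑_{j=n}^{k-1} a(j) m_{j+1}` plus two fractions of single terms
`a(j) m_{j+1}`, and all three are small by the noise hypothesis applied with horizon `T + 1`;
the extra `1` absorbs the step `a(n) ≤ a(0) ≤ 1` by which `t̃` may exceed `t([t̃])`. -/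

open Finset

theorem intervalIntegral_of_piecewise_const {E : Type*} [NormedAddCommGroup E] [NormedSpace ℝ E]
    [CompleteSpace E] {t : ℕ → ℝ} (ht : Monotone t) {f : ℝ → E} {v : ℕ → E}
    (hf : ∀ j, Set.EqOn f (fun _ => v j) (Set.Ioo (t j) (t (j + 1))))
    {n : ℕ} {τ : ℝ} (hτ : τ ∈ Set.Icc (t n) (t (n + 1))) :
    IntervalIntegrable f volume (t 0) τ ∧
      ∫ p in t 0..τ, f p = ∑ j ∈ range n, (t (j + 1) - t j) • v j + (τ - t n) • v n := by
  have block : ∀ j, ∀ σ ∈ Set.Icc (t j) (t (j + 1)),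
      IntervalIntegrable f volume (t j) σ ∧ ∫ p in t j..σ, f p = (σ - t j) • v j := by
    intro j σ hσ
    have hEq : Set.EqOn f (fun _ => v j) (Set.Ioo (t j) σ) :=
      (hf j).mono (Set.Ioo_subset_Ioo_right hσ.2)
    refine ⟨?_, ?_⟩
    · exact (intervalIntegrable_congr_uIoo (by rwa [Set.uIoo_of_le hσ.1])).mpr
        intervalIntegrable_const
    · rw [intervalIntegral.integral_congr_Ioo_of_le hσ.1 hEq, intervalIntegral.integral_const]
  have hblock : ∀ j, IntervalIntegrable f volume (t j) (t (j + 1)) := fun j =>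
    (block j _ ⟨ht (Nat.le_succ j), le_rfl⟩).1
  have hfirst := IntervalIntegrable.trans_iterate fun j (_ : j < n) => hblock j
  have hlast := block n τ hτ
  refine ⟨hfirst.trans hlast.1, ?_⟩
  rw [← intervalIntegral.integral_add_adjacent_intervals hfirst hlast.1, hlast.2,
    ← intervalIntegral.sum_integral_adjacent_intervals fun j _ => hblock j]
  congr 1
  exact sum_congr rfl fun j _ => (block j _ ⟨ht (Nat.le_succ j), le_rfl⟩).2

theorem lineInterp_eq_add_smul {E : Type*} [AddCommGroup E] [Module ℝ E] {t₀ t₁ : ℝ}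
    (h : t₀ ≠ t₁) {y₀ y₁ v : E} (hy : y₁ = y₀ + (t₁ - t₀) • v) (τ : ℝ) :
    ((τ - t₀) / (t₁ - t₀)) • y₁ + ((t₁ - τ) / (t₁ - t₀)) • y₀ = y₀ + (τ - t₀) • v := by
  have h' : t₁ - t₀ ≠ 0 := sub_ne_zero.mpr h.symm
  rw [hy]
  match_scalars <;> field_simp; ring

theorem norm_sum_Ico_le_of_window {E : Type*} [SeminormedAddCommGroup E] {a : ℕ → ℝ}
    (ha : ∀ n, 0 ≤ a n) {w : ℕ → E} {T δ : ℝ} {n k : ℕ}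
    (hne : ∃ j, n < j ∧ T ≤ ∑ i ∈ Ico n j, a i)
    (hw : ∀ k, n ≤ k → k ≤ sInf {j | n < j ∧ T ≤ ∑ i ∈ Ico n j, a i} →
      ‖∑ j ∈ Icc n k, w j‖ ≤ δ)
    (hnk : n ≤ k) (hsum : ∑ i ∈ Ico n k, a i < T) (hδ : 0 ≤ δ) :
    ‖∑ j ∈ Ico n k, w j‖ ≤ δ := by
  rcases hnk.eq_or_lt with rfl | hlt
  · simpa using hδ
  obtain ⟨k, rfl⟩ := Nat.exists_eq_add_one_of_ne_zero (by omega : k ≠ 0)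
  rw [Ico_add_one_right_eq_Icc]
  refine hw k (by omega) (le_csInf hne fun j ⟨hnj, hj⟩ => ?_)
  by_contra! hjk
  have : ∑ i ∈ Ico n j, a i ≤ ∑ i ∈ Ico n (k + 1), a i :=
    sum_le_sum_of_subset_of_nonneg (Ico_subset_Ico_right (by omega)) fun i _ _ => ha i
  linarith

structure StepGrid (a t : ℕ → ℝ) (idx : ℝ → ℕ) : Prop where
  pos : ∀ n, 0 < a n
  zero : t 0 = 0
  succ : ∀ n, t (n + 1) = t n + a n
  tendsto : Tendsto t atTop atTop
  idx_eq : ∀ τ, 0 ≤ τ → idx τ = sSup {n | t n ≤ τ}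

def gridInterp {E : Type*} [AddCommGroup E] [Module ℝ E] (a t : ℕ → ℝ) (idx : ℝ → ℕ)
    (v : ℕ → E) (τ : ℝ) : E :=
  ∑ j ∈ range (idx τ), a j • v j + (τ - t (idx τ)) • v (idx τ)

theorem gridInterp_add {E : Type*} [AddCommGroup E] [Module ℝ E] (a t : ℕ → ℝ)
    (idx : ℝ → ℕ) (v w : ℕ → E) (τ : ℝ) :
    gridInterp a t idx (v + w) τ = gridInterp a t idx v τ + gridInterp a t idx w τ := by
  simp only [gridInterp, Pi.add_apply, smul_add, sum_add_distrib]
  abel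

namespace StepGrid

variable {a t : ℕ → ℝ} {idx : ℝ → ℕ}

theorem of_partialSums (hapos : ∀ n, 0 < a n)
    (hdiv : Tendsto (fun n => ∑ k ∈ range n, a k) atTop atTop)
    (ht : ∀ n, t n = ∑ k ∈ range n, a k)
    (hidx : ∀ τ, 0 ≤ τ → idx τ = sSup {n | t n ≤ τ}) : StepGrid a t idx where
  pos := hapos
  zero := by simp [ht]
  succ n := by simp [ht, sum_range_succ]
  tendsto := by simpa only [← ht] using hdiv
  idx_eq := hidx

theorem strictMono (hg : StepGrid a t idx) : StrictMono t :=
  strictMono_nat_of_lt_succ fun n => by linarith [hg.succ n, hg.pos n]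

theorem nonneg (hg : StepGrid a t idx) (n : ℕ) : 0 ≤ t n :=
  hg.zero ▸ hg.strictMono.monotone n.zero_le

theorem sum_Ico_eq_sub (hg : StepGrid a t idx) {n k : ℕ} (hnk : n ≤ k) :
    ∑ i ∈ Ico n k, a i = t k - t n := by
  induction k, hnk using Nat.le_induction with
  | base => simp
  | succ k hnk ih => rw [sum_Ico_succ_top hnk, ih, hg.succ]; ring

theorem exists_sum_Ico_ge (hg : StepGrid a t idx) (n : ℕ) (T : ℝ) :
    ∃ j, n < j ∧ T ≤ ∑ i ∈ Ico n j, a i := by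
  obtain ⟨j, hj, hnj⟩ :=
    ((hg.tendsto.eventually_ge_atTop (t n + T)).and (eventually_gt_atTop n)).exists
  exact ⟨j, hnj, by rw [hg.sum_Ico_eq_sub hnj.le]; linarith⟩

theorem idx_eq_of_mem_Ico (hg : StepGrid a t idx) {n : ℕ} {τ : ℝ}
    (hτ : τ ∈ Set.Ico (t n) (t (n + 1))) : idx τ = n := by
  have hub : ∀ k ∈ {k | t k ≤ τ}, k ≤ n := fun k hk =>
    Nat.lt_succ_iff.mp (hg.strictMono.lt_iff_lt.mp (lt_of_le_of_lt hk hτ.2))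
  rw [hg.idx_eq τ ((hg.nonneg n).trans hτ.1)]
  exact le_antisymm (csSup_le ⟨n, hτ.1⟩ hub) (le_csSup ⟨n, hub⟩ hτ.1)

theorem mem_Ico_idx (hg : StepGrid a t idx) {τ : ℝ} (hτ : 0 ≤ τ) :
    τ ∈ Set.Ico (t (idx τ)) (t (idx τ + 1)) := by
  obtain ⟨M, hM⟩ := (hg.tendsto.eventually_gt_atTop τ).exists
  have hbdd : BddAbove {k | t k ≤ τ} :=
    ⟨M, fun k hk => (hg.strictMono.lt_iff_lt.mp (lt_of_le_of_lt hk hM)).le⟩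
  have hmem : t (idx τ) ≤ τ := by
    rw [hg.idx_eq τ hτ]
    exact Nat.sSup_mem ⟨0, by simpa [hg.zero] using hτ⟩ hbdd
  refine ⟨hmem, not_le.mp fun hsucc => ?_⟩
  have : idx τ + 1 ≤ idx τ := by
    rw [hg.idx_eq τ hτ] at hsucc ⊢
    exact le_csSup hbdd hsucc
  omega

theorem le_idx (hg : StepGrid a t idx) {n : ℕ} {τ : ℝ} (hτ : t n ≤ τ) : n ≤ idx τ :=
  Nat.lt_succ_iff.mp <| hg.strictMono.lt_iff_lt.mp <|
    hτ.trans_lt (hg.mem_Ico_idx ((hg.nonneg n).trans hτ)).2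

theorem eq_add_gridInterp {E : Type*} [AddCommGroup E] [Module ℝ E]
    (hg : StepGrid a t idx) {y : ℕ → E} {v : ℕ → E} {X : ℝ → E}
    (hy : ∀ n, y (n + 1) = y n + a n • v n)
    (hX : ∀ n : ℕ, ∀ τ : ℝ, t n ≤ τ → τ < t (n + 1) →
      X τ = ((τ - t n) / (t (n + 1) - t n)) • y (n + 1) +
        ((t (n + 1) - τ) / (t (n + 1) - t n)) • y n)
    {τ : ℝ} (hτ : 0 ≤ τ) : X τ = y 0 + gridInterp a t idx v τ := by
  have hy0 : ∀ n, y n = y 0 + ∑ j ∈ range n, a j • v j := by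
    intro n
    induction n with
    | zero => simp
    | succ n ih => rw [hy, ih, sum_range_succ, add_assoc]
  obtain ⟨h1, h2⟩ := hg.mem_Ico_idx hτ
  have hslope : y (idx τ + 1) = y (idx τ) + (t (idx τ + 1) - t (idx τ)) • v (idx τ) := by
    rw [hy, hg.succ, add_sub_cancel_left]
  rw [hX _ τ h1 h2, lineInterp_eq_add_smul (hg.strictMono (Nat.lt_succ_self _)).ne hslope,
    hy0, gridInterp, add_assoc]

section Integral

variable {E : Type*} [NormedAddCommGroup E] [NormedSpace ℝ E] [CompleteSpace E]

theorem integral_comp_idx (hg : StepGrid a t idx) (v : ℕ → E) {τ : ℝ} (hτ : 0 ≤ τ) :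
    IntervalIntegrable (fun p => v (idx p)) volume 0 τ ∧
      ∫ p in (0 : ℝ)..τ, v (idx p) = gridInterp a t idx v τ := by
  have hstep : ∀ j, Set.EqOn (fun p => v (idx p)) (fun _ => v j) (Set.Ioo (t j) (t (j + 1))) :=
    fun j p hp => congrArg v (hg.idx_eq_of_mem_Ico ⟨hp.1.le, hp.2⟩)
  simpa only [hg.zero, hg.succ, add_sub_cancel_left, gridInterp] using
    intervalIntegral_of_piecewise_const hg.strictMono.monotone hstep
      (Set.Ico_subset_Icc_self (hg.mem_Ico_idx hτ))

theorem sub_integral_eq_gridInterp_sub (hg : StepGrid a t idx) {y : ℕ → E} {v w : ℕ → E}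
    {X : ℝ → E} (hy : ∀ n, y (n + 1) = y n + a n • (v n + w n))
    (hX : ∀ n : ℕ, ∀ τ : ℝ, t n ≤ τ → τ < t (n + 1) →
      X τ = ((τ - t n) / (t (n + 1) - t n)) • y (n + 1) +
        ((t (n + 1) - τ) / (t (n + 1) - t n)) • y n)
    {τ₁ τ₂ : ℝ} (h₁ : 0 ≤ τ₁) (h₂ : 0 ≤ τ₂) :
    X τ₂ - (X τ₁ + ∫ p in τ₁..τ₂, v (idx p)) =
      gridInterp a t idx w τ₂ - gridInterp a t idx w τ₁ := by
  obtain ⟨hint₁, hv₁⟩ := hg.integral_comp_idx v h₁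
  obtain ⟨hint₂, hv₂⟩ := hg.integral_comp_idx v h₂
  have hy' : ∀ n, y (n + 1) = y n + a n • (v + w) n := hy
  rw [← intervalIntegral.integral_interval_sub_left hint₂ hint₁, hv₁, hv₂,
    hg.eq_add_gridInterp hy' hX h₁, hg.eq_add_gridInterp hy' hX h₂,
    gridInterp_add, gridInterp_add]
  abel

end Integral

theorem norm_gridInterp_sub_le {E : Type*} [SeminormedAddCommGroup E] [NormedSpace ℝ E]
    (hg : StepGrid a t idx) (ha : ∀ n, a n ≤ 1) {v : ℕ → E} {N : ℕ} {T δ : ℝ} (hT : 0 < T)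
    (hwin : ∀ n ≥ N, ∀ k ≥ n, ∑ i ∈ Ico n k, a i < T + 1 →
      ‖∑ j ∈ Ico n k, a j • v j‖ ≤ δ)
    {τ₁ τ₂ : ℝ} (h₁ : t N ≤ τ₁) (h₁₂ : τ₁ ≤ τ₂) (h₂ : τ₂ ≤ τ₁ + T) :
    ‖gridInterp a t idx v τ₂ - gridInterp a t idx v τ₁‖ ≤ 3 * δ := by
  set n := idx τ₁
  set k := idx τ₂
  have hτ₁ := hg.mem_Ico_idx ((hg.nonneg N).trans h₁)
  have hτ₂ := hg.mem_Ico_idx (((hg.nonneg N).trans h₁).trans h₁₂)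
  have hNn : N ≤ n := hg.le_idx h₁
  have hnk : n ≤ k := hg.le_idx (hτ₁.1.trans h₁₂)
  have hpartial : ∀ j ≥ N, ∀ σ, 0 ≤ σ → σ ≤ a j → ‖σ • v j‖ ≤ δ := by
    intro j hj σ hσ hσa
    have hone := hwin j hj (j + 1) (Nat.le_succ j) (by simp; linarith [ha j])
    rw [Nat.Ico_succ_singleton, sum_singleton] at hone
    calc ‖σ • v j‖ = σ * ‖v j‖ := by rw [norm_smul, Real.norm_of_nonneg hσ]
      _ ≤ a j * ‖v j‖ := by gcongr
      _ = ‖a j • v j‖ := by rw [norm_smul, Real.norm_of_nonneg (hg.pos j).le]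
      _ ≤ δ := hone
  have hdecomp : gridInterp a t idx v τ₂ - gridInterp a t idx v τ₁ =
      ∑ j ∈ Ico n k, a j • v j + (τ₂ - t k) • v k - (τ₁ - t n) • v n := by
    rw [gridInterp, gridInterp, Finset.sum_Ico_eq_sub _ hnk]
    abel
  have hmid := hwin n hNn k hnk <| by
    rw [hg.sum_Ico_eq_sub hnk]; linarith [hg.succ n, ha n, hτ₁.2, hτ₂.1]
  have hlast := hpartial k (hNn.trans hnk) (τ₂ - t k) (by linarith [hτ₂.1])
    (by linarith [hτ₂.2, hg.succ k])
  have hfirst := hpartial n hNn (τ₁ - t n) (by linarith [hτ₁.1])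
    (by linarith [hτ₁.2, hg.succ n])
  rw [hdecomp]
  calc _ ≤ ‖∑ j ∈ Ico n k, a j • v j‖ + ‖(τ₂ - t k) • v k‖ + ‖(τ₁ - t n) • v n‖ :=
        norm_sub_le_of_le (norm_add_le _ _) le_rfl
    _ ≤ 3 * δ := by linarith

end StepGrid

theorem stmt_14_general {d : ℕ} {S : Type*}
    (h : Euc d → S → (Metric.closedBall (0 : Euc d) 1) → Euc d)
    (a : ℕ → ℝ) (ha0 : a 0 ≤ 1) (hamono : ∀ n, a (n + 1) ≤ a n) (hapos : ∀ n, 0 < a n)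
    (hadiv : Tendsto (fun n => ∑ k ∈ Finset.range n, a k) atTop atTop)
    (x : ℕ → Euc d) (s : ℕ → S) (u : ℕ → (Metric.closedBall (0 : Euc d) 1))
    (m : ℕ → Euc d)
    (hrec : ∀ n : ℕ, x (n + 1) = x n + a n • (h (x n) (s n) (u n) + m (n + 1)))
    (hnoise : ∀ T > (0 : ℝ), ∀ ε > (0 : ℝ), ∃ N : ℕ, ∀ n ≥ N, ∀ k : ℕ, n ≤ k →
      k ≤ sInf {j : ℕ | n < j ∧ T ≤ ∑ i ∈ Finset.Ico n j, a i} →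
      ‖∑ j ∈ Finset.Icc n k, a j • m (j + 1)‖ ≤ ε)
    (t : ℕ → ℝ) (ht : ∀ n, t n = ∑ k ∈ Finset.range n, a k)
    (xbar : ℝ → Euc d)
    (hxbar : ∀ n : ℕ, ∀ τ : ℝ, t n ≤ τ → τ < t (n + 1) →
      xbar τ = ((τ - t n) / (t (n + 1) - t n)) • x (n + 1) +
        ((t (n + 1) - τ) / (t (n + 1) - t n)) • x n)
    (idx : ℝ → ℕ) (hidx : ∀ τ : ℝ, 0 ≤ τ → idx τ = sSup {n : ℕ | t n ≤ τ})
    (xt : ℝ → ℝ → Euc d)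
    (hxt : ∀ tt : ℝ, 0 ≤ tt → ∀ q : ℝ, 0 ≤ q →
      xt tt q = xbar tt +
        ∫ p in (0 : ℝ)..q, h (x (idx (tt + p))) (s (idx (tt + p))) (u (idx (tt + p)))) :
    ∀ T > (0 : ℝ), ∀ ε > (0 : ℝ), ∃ t₀ : ℝ, ∀ tt ≥ t₀, ∀ q ∈ Set.Icc (0 : ℝ) T,
      ‖xbar (tt + q) - xt tt q‖ ≤ ε := by
  have hg := StepGrid.of_partialSums hapos hadiv ht hidx
  have ha1 : ∀ n, a n ≤ 1 := fun n => (antitone_nat_of_succ_le hamono n.zero_le).trans ha0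
  intro T hT ε hε
  obtain ⟨N, hN⟩ := hnoise (T + 1) (by linarith) (ε / 3) (by linarith)
  have hwin : ∀ n ≥ N, ∀ k ≥ n, ∑ i ∈ Ico n k, a i < T + 1 →
      ‖∑ j ∈ Ico n k, a j • m (j + 1)‖ ≤ ε / 3 := fun n hn k hk hsum =>
    norm_sum_Ico_le_of_window (fun i => (hapos i).le) (hg.exists_sum_Ico_ge n _) (hN n hn) hk
      hsum (by linarith)
  refine ⟨t N, fun tt htt q hq => ?_⟩
  have htt0 : 0 ≤ tt := (hg.nonneg N).trans htt
  have hdiff : xbar (tt + q) - xt tt q = gridInterp a t idx (fun j => m (j + 1)) (tt + q) -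
      gridInterp a t idx (fun j => m (j + 1)) tt := by
    rw [hxt tt htt0 q hq.1, intervalIntegral.integral_comp_add_left
      (fun p => h (x (idx p)) (s (idx p)) (u (idx p))), add_zero]
    exact hg.sub_integral_eq_gridInterp_sub (v := fun j => h (x j) (s j) (u j)) hrec hxbar
      htt0 (by linarith [hq.1])
  rw [hdiff]
  linarith [hg.norm_gridInterp_sub_le ha1 hT hwin htt (le_add_of_nonneg_right hq.1)
    (by linarith [hq.2])]

/-- the linearly interpolated iterates track, on every finite time
horizon, the solutions of the non-autonomous o.d.e. driven by the piecewise constant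
drift `h(x_{[·]}, s_{[·]}, u_{[·]})`. -/
theorem stmt_14 {d : ℕ} {S : Type*} [MetricSpace S] [CompactSpace S]
    (h : Euc d → S → (Metric.closedBall (0 : Euc d) 1) → Euc d)
    (hc : Continuous (fun p : Euc d × S × (Metric.closedBall (0 : Euc d) 1) =>
      h p.1 p.2.1 p.2.2))
    (a : ℕ → ℝ) (ha0 : a 0 ≤ 1) (hamono : ∀ n, a (n + 1) ≤ a n) (hapos : ∀ n, 0 < a n)
    (hadiv : Tendsto (fun n => ∑ k ∈ Finset.range n, a k) atTop atTop)
    (hasq : Summable (fun n => (a n) ^ 2))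
    (x : ℕ → Euc d) (s : ℕ → S) (u : ℕ → (Metric.closedBall (0 : Euc d) 1))
    (m : ℕ → Euc d)
    (hrec : ∀ n : ℕ, x (n + 1) = x n + a n • (h (x n) (s n) (u n) + m (n + 1)))
    (hbdd : ∃ C : ℝ, ∀ n, ‖x n‖ ≤ C)
    (hnoise : ∀ T > (0 : ℝ), ∀ ε > (0 : ℝ), ∃ N : ℕ, ∀ n ≥ N, ∀ k : ℕ, n ≤ k →
      k ≤ sInf {j : ℕ | n < j ∧ T ≤ ∑ i ∈ Finset.Ico n j, a i} →
      ‖∑ j ∈ Finset.Icc n k, a j • m (j + 1)‖ ≤ ε)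
    (t : ℕ → ℝ) (ht : ∀ n, t n = ∑ k ∈ Finset.range n, a k)
    (xbar : ℝ → Euc d)
    (hxbar : ∀ n : ℕ, ∀ τ : ℝ, t n ≤ τ → τ < t (n + 1) →
      xbar τ = ((τ - t n) / (t (n + 1) - t n)) • x (n + 1) +
        ((t (n + 1) - τ) / (t (n + 1) - t n)) • x n)
    (idx : ℝ → ℕ) (hidx : ∀ τ : ℝ, 0 ≤ τ → idx τ = sSup {n : ℕ | t n ≤ τ})
    (xt : ℝ → ℝ → Euc d)
    (hxt : ∀ tt : ℝ, 0 ≤ tt → ∀ q : ℝ, 0 ≤ q →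
      xt tt q = xbar tt +
        ∫ p in (0 : ℝ)..q, h (x (idx (tt + p))) (s (idx (tt + p))) (u (idx (tt + p)))) :
    ∀ T > (0 : ℝ), ∀ ε > (0 : ℝ), ∃ t₀ : ℝ, ∀ tt ≥ t₀, ∀ q ∈ Set.Icc (0 : ℝ) T,
      ‖xbar (tt + q) - xt tt q‖ ≤ ε :=
  stmt_14_general h a ha0 hamono hapos hadiv x s u m hrec hnoise t ht xbar hxbar idx hidx xt hxt
end
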